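/- arXiv:2602.10647 — 8 statements merged into one kernel-verified Lean document; each statement's English description precedes it below -/
import Mathlib

section
/- Let σ : G → H be a continuous homomorphism of locally compact Hausdorff topological groups. Then σ is a proper map if and only if the following three conditions hold: the kernel of σ is compact; the image σ(G) is closed in H; and the corestriction of σ, viewed as a map from G onto σ(G) equipped with the subspace topology inherited from H, is an open map. -/
/-!
A proper map is closed, so the corestriction of `σ` is a quotient map, and a continuous
homomorphism of topological groups that is a quotient map is open. Conversely, when the
corestriction is open, `σ` factors as `G → G ⧸ ker σ ≃ₜ σ(G) ↪ H`: the projection onto the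
quotient by a compact subgroup, the homeomorphism of the first isomorphism theorem, and a closed
embedding, each of which is proper.
-/

open Topology

namespace QuotientGroup

theorem isProperMap_mk {G : Type*} [Group G] [TopologicalSpace G] [IsTopologicalGroup G]
    {N : Subgroup G} (hN : IsCompact (N : Set G)) : IsProperMap (mk : G → G ⧸ N) := by
  refine isProperMap_iff_isClosedMap_and_compact_fibers.2 ⟨continuous_mk, isClosedMap_coe hN, ?_⟩
  intro y
  obtain ⟨g, rfl⟩ := mk_surjective y
  rw [← Set.image_singleton, preimage_image_mk_eq_mul]
  exact isCompact_singleton.mul hN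

end QuotientGroup

namespace MonoidHom

variable {G H : Type*} [Group G] [TopologicalSpace G] [IsTopologicalGroup G]
  [Group H] [TopologicalSpace H] {f : G →* H}

theorem isStrictMap_iff_isOpenMap_rangeFactorization (hf : Continuous f) :
    IsStrictMap f ↔ IsOpenMap (Set.rangeFactorization f) :=
  ⟨fun h => (MonoidHom.isStrictMap_iff_isOpenQuotientMap_rangeRestrict.1 h).isOpenMap,
    fun h => isStrictMap_iff_isQuotientMap_rangeFactorization.2 <|
      h.isQuotientMap hf.rangeFactorization Set.rangeFactorization_surjective⟩

theorem isProperMap_iff_isCompact_ker_isClosed_range_isStrictMap :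
    IsProperMap f ↔ IsCompact (f.ker : Set G) ∧ IsClosed (Set.range f) ∧ IsStrictMap f := by
  constructor
  · intro hf
    exact ⟨hf.isCompact_preimage isCompact_singleton, hf.isClosedMap.isClosed_range,
      hf.isClosedMap.isStrictMap hf.continuous⟩
  · rintro ⟨hker, hrange, hstrict⟩
    have hrange' : IsClosed (f.range : Set H) := by rwa [coe_range]
    let e := ContinuousMulEquiv.quotientKerEquivRange hstrict
    have hfactor : (f : G → H) = Subtype.val ∘ e ∘ ((↑) : G → G ⧸ f.ker) := rfl
    rw [hfactor]
    exact hrange'.isProperMap_subtypeVal.comp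
      (e.toHomeomorph.isProperMap.comp (QuotientGroup.isProperMap_mk hker))

end MonoidHom

theorem properness_criterion_general
    {G H : Type*}
    [Group G] [TopologicalSpace G] [IsTopologicalGroup G]
    [Group H] [TopologicalSpace H] [LocallyCompactSpace H] [T2Space H]
    (σ : G →* H) (hσ : Continuous σ) :
    (∀ K : Set H, IsCompact K → IsCompact (σ ⁻¹' K)) ↔
      IsCompact (σ.ker : Set G) ∧ IsClosed (Set.range σ) ∧
        IsOpenMap (fun x : G => (⟨σ x, Set.mem_range_self x⟩ : Set.range σ)) := by
  calc (∀ K : Set H, IsCompact K → IsCompact (σ ⁻¹' K)) ↔ IsProperMap σ :=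
        (isProperMap_iff_isCompact_preimage.trans (and_iff_right hσ)).symm
    _ ↔ IsCompact (σ.ker : Set G) ∧ IsClosed (Set.range σ) ∧ IsStrictMap σ :=
        σ.isProperMap_iff_isCompact_ker_isClosed_range_isStrictMap
    _ ↔ _ := by rw [σ.isStrictMap_iff_isOpenMap_rangeFactorization hσ]; rfl

/-- **Properness criterion for continuous homomorphisms of locally compact groups.**
A continuous homomorphism `σ : G → H` of locally compact Hausdorff topological groups is a
proper map (preimages of compact sets are compact) if and only if its kernel is compact, its
range is closed in `H`, and the corestriction of `σ` onto its range (with the subspace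
topology) is an open map. -/
theorem properness_criterion
    {G H : Type*}
    [Group G] [TopologicalSpace G] [IsTopologicalGroup G] [LocallyCompactSpace G] [T2Space G]
    [Group H] [TopologicalSpace H] [IsTopologicalGroup H] [LocallyCompactSpace H] [T2Space H]
    (σ : G →* H) (hσ : Continuous σ) :
    (∀ K : Set H, IsCompact K → IsCompact (σ ⁻¹' K)) ↔
      IsCompact (σ.ker : Set G) ∧ IsClosed (Set.range σ) ∧
        IsOpenMap (fun x : G => (⟨σ x, Set.mem_range_self x⟩ : Set.range σ)) :=
  properness_criterion_general σ hσ
end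

section
/- Let σ : G → H be a continuous homomorphism of locally compact Hausdorff topological groups, and let N be a closed normal subgroup of G such that σ(N) is a normal subgroup of H. Let K be the topological closure of σ(N) in H, let ρ : N → K be the restriction of σ, and let σ̇ : G/N → H/K be the induced continuous homomorphism (σ̇(xN) = σ(x)K). Then σ is proper if and only if both ρ and σ̇ are proper; moreover, if σ is proper, then σ(G) is closed in H. -/
/-!
Let `K = closure σ(N)`. If `σ` is proper, so is its restriction to the closed subgroup `N`. For
the quotient map, a compact set of `H ⧸ K` lifts to a compact `D ⊆ H`, and by density we have
`D * K ⊆ D * U * σ(N)` for a compact neighbourhood `U` of `1`; hence every coset in the preimage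
meets the compact set `σ⁻¹(D * U)`. Conversely, if `C ⊆ H` is compact, lift the compact preimage
of its image in `H ⧸ K` to a compact `E ⊆ G`: then `σ⁻¹(C) ⊆ E * ρ⁻¹(σ(E)⁻¹ * C)`, a product of
compact sets.
-/

open Set Pointwise Topology

theorem IsOpenMap.exists_isCompact_image_superset {X Y : Type*} [TopologicalSpace X]
    [TopologicalSpace Y] [LocallyCompactSpace X] {f : X → Y} (hf : IsOpenMap f)
    (hsurj : Function.Surjective f) {C : Set Y} (hC : IsCompact C) :
    ∃ D : Set X, IsCompact D ∧ C ⊆ f '' D := by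
  choose g hg using hsurj
  choose K hK hKx using fun x : X => exists_compact_mem_nhds x
  have hnhds : ∀ y ∈ C, f '' K (g y) ∈ 𝓝 y := fun y _ => by
    simpa only [hg y] using hf.image_mem_nhds (hKx (g y))
  obtain ⟨t, -, hCt⟩ := hC.elim_nhds_subcover _ hnhds
  refine ⟨⋃ y ∈ t, K (g y), t.isCompact_biUnion fun y _ => hK (g y), ?_⟩
  rwa [image_iUnion₂]

theorem Set.MapsTo.isCompact_preimage_restrict {X Y : Type*} [TopologicalSpace X]
    [TopologicalSpace Y] {f : X → Y} (hf : ∀ C, IsCompact C → IsCompact (f ⁻¹' C))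
    {s : Set X} (hs : IsClosed s) {t : Set Y} (hst : MapsTo f s t) :
    ∀ C : Set t, IsCompact C → IsCompact (hst.restrict f s t ⁻¹' C) := by
  intro C hC
  have himage : (↑) '' (hst.restrict f s t ⁻¹' C) = f ⁻¹' ((↑) '' C) ∩ s := by
    ext x
    constructor
    · rintro ⟨⟨x, hx⟩, hxC, rfl⟩
      exact ⟨⟨_, hxC, rfl⟩, hx⟩
    · rintro ⟨⟨y, hyC, hy⟩, hx⟩
      refine ⟨⟨x, hx⟩, ?_, rfl⟩
      rwa [mem_preimage, show hst.restrict f s t ⟨x, hx⟩ = y from Subtype.ext hy.symm]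
  rw [Subtype.isCompact_iff, himage]
  exact (hf _ (hC.image continuous_subtype_val)).inter_right hs

theorem mul_closure_subset_mul_mul {H : Type*} [Group H] [TopologicalSpace H]
    [IsTopologicalGroup H] {U : Set H} (hU : U ∈ 𝓝 1) (D S : Set H) :
    D * closure S ⊆ D * U * S := by
  have hsymm : ∀ x ∈ U ∩ U⁻¹, x⁻¹ ∈ U ∩ U⁻¹ := fun x hx => ⟨hx.2, by simpa using hx.1⟩
  have hclosure : closure S ⊆ U * S :=
    (closure_subset_mul_left_of_mem_nhds_one_of_inv S (Filter.inter_mem hU (inv_mem_nhds_one H hU))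
      hsymm).trans (mul_subset_mul_right inter_subset_left)
  rw [mul_assoc]
  exact mul_subset_mul_left hclosure

section QuotientClosure

variable {G H : Type*} [Group G] [Group H] [TopologicalSpace H] [IsTopologicalGroup H]

theorem Subgroup.mapsTo_topologicalClosure_map (N : Subgroup G) (σ : G →* H) :
    MapsTo σ N (N.map σ).topologicalClosure :=
  fun _ hx => Subgroup.le_topologicalClosure _ (Subgroup.mem_map_of_mem σ hx)

abbrev MonoidHom.restrictClosure (σ : G →* H) (N : Subgroup G) :
    N → (N.map σ).topologicalClosure :=
  (N.mapsTo_topologicalClosure_map σ).restrict σ N _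

abbrev MonoidHom.quotientClosureMap (σ : G →* H) (N : Subgroup G) [N.Normal]
    [(N.map σ).topologicalClosure.Normal] : G ⧸ N →* H ⧸ (N.map σ).topologicalClosure :=
  QuotientGroup.map N _ σ (N.mapsTo_topologicalClosure_map σ)

variable [TopologicalSpace G] {σ : G →* H} (N : Subgroup G) [N.Normal]
  [(N.map σ).topologicalClosure.Normal]

theorem MonoidHom.continuous_quotientClosureMap (hσ : Continuous σ) :
    Continuous (σ.quotientClosureMap N) := by
  rw [(QuotientGroup.isQuotientMap_mk N).continuous_iff]
  exact QuotientGroup.continuous_mk.comp hσ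

theorem MonoidHom.isCompact_preimage_quotientClosureMap [LocallyCompactSpace H]
    (hσ : Continuous σ) (hσp : ∀ C, IsCompact C → IsCompact (σ ⁻¹' C)) :
    ∀ C, IsCompact C → IsCompact (σ.quotientClosureMap N ⁻¹' C) := by
  intro C hC
  -- as an instance, this makes `H ⧸ closure σ(N)` Hausdorff, so `C` is closed
  have : IsClosed ((N.map σ).topologicalClosure : Set H) := Subgroup.isClosed_topologicalClosure _
  obtain ⟨D, hD, hCD⟩ :=
    QuotientGroup.isOpenMap_coe.exists_isCompact_image_superset QuotientGroup.mk_surjective hC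
  obtain ⟨U, hU, hU1⟩ := exists_compact_mem_nhds (1 : H)
  refine ((hσp _ (hD.mul hU)).image QuotientGroup.continuous_mk).of_isClosed_subset
    (hC.isClosed.preimage (σ.continuous_quotientClosureMap N hσ)) ?_
  intro q hq
  obtain ⟨x, rfl⟩ := QuotientGroup.mk_surjective q
  have hσx : σ x ∈ D * closure (σ '' N) := by
    have hmem : σ x ∈ (QuotientGroup.mk : H → H ⧸ _) ⁻¹' (QuotientGroup.mk '' D) := hCD hq
    rwa [QuotientGroup.preimage_image_mk_eq_mul] at hmem
  obtain ⟨w, hw, _, ⟨n, hn, rfl⟩, hwx⟩ := mul_closure_subset_mul_mul hU1 D _ hσx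
  refine ⟨x * n⁻¹, by simpa [← hwx] using hw, QuotientGroup.eq.2 ?_⟩
  simpa using hn

variable [IsTopologicalGroup G]

theorem MonoidHom.isCompact_preimage_of_restrictClosure_of_quotientClosureMap
    [LocallyCompactSpace G] [T2Space H] (hσ : Continuous σ)
    (hρ : ∀ C, IsCompact C → IsCompact (σ.restrictClosure N ⁻¹' C))
    (hquot : ∀ C, IsCompact C → IsCompact (σ.quotientClosureMap N ⁻¹' C)) :
    ∀ C, IsCompact C → IsCompact (σ ⁻¹' C) := by
  intro C hC
  obtain ⟨E, hE, hE'⟩ := QuotientGroup.isOpenMap_coe.exists_isCompact_image_superset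
    QuotientGroup.mk_surjective (hquot _ (hC.image QuotientGroup.continuous_mk))
  have hL : IsCompact ((σ '' E)⁻¹ * C) := (hE.image hσ).inv.mul hC
  have hF := hρ _ ((Subgroup.isClosed_topologicalClosure _).isClosedEmbedding_subtypeVal
    |>.isCompact_preimage hL)
  refine (hE.mul (hF.image continuous_subtype_val)).of_isClosed_subset
    (hC.isClosed.preimage hσ) ?_
  intro x hx
  have hxEN : x ∈ E * N := by
    rw [← QuotientGroup.preimage_image_mk_eq_mul]
    exact hE' ⟨σ x, hx, rfl⟩
  obtain ⟨e, he, n, hn, rfl⟩ := hxEN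
  refine ⟨e, he, n, ⟨⟨n, hn⟩, ?_, rfl⟩, rfl⟩
  exact ⟨(σ e)⁻¹, inv_mem_inv.2 (mem_image_of_mem σ he), σ (e * n), hx, by simp⟩

end QuotientClosure

theorem proper_iff_restriction_and_quotient_proper_general
    {G H : Type*}
    [Group G] [TopologicalSpace G] [IsTopologicalGroup G] [LocallyCompactSpace G]
    [Group H] [TopologicalSpace H] [IsTopologicalGroup H] [LocallyCompactSpace H] [T2Space H]
    (σ : G →* H) (hσ : Continuous σ)
    (N : Subgroup G) [N.Normal] (hNclosed : IsClosed (N : Set G))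
    [((N.map σ).topologicalClosure).Normal] :
    ((∀ K : Set H, IsCompact K → IsCompact (σ ⁻¹' K)) ↔
      ((∀ K : Set ((N.map σ).topologicalClosure), IsCompact K →
          IsCompact ((fun x : N =>
            (⟨σ x, Subgroup.le_topologicalClosure (N.map σ)
              (Subgroup.mem_map_of_mem σ x.2)⟩ : (N.map σ).topologicalClosure)) ⁻¹' K)) ∧
        (∀ K : Set (H ⧸ (N.map σ).topologicalClosure), IsCompact K →
          IsCompact ((QuotientGroup.map N ((N.map σ).topologicalClosure) σ
            (fun x hx => Subgroup.mem_comap.mpr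
              (Subgroup.le_topologicalClosure (N.map σ)
                (Subgroup.mem_map_of_mem σ hx)))) ⁻¹' K)))) ∧
    ((∀ K : Set H, IsCompact K → IsCompact (σ ⁻¹' K)) → IsClosed (Set.range σ)) := by
  refine ⟨⟨fun hp => ⟨(N.mapsTo_topologicalClosure_map σ).isCompact_preimage_restrict hp hNclosed,
      σ.isCompact_preimage_quotientClosureMap N hσ hp⟩,
    fun ⟨hρp, hσp⟩ => σ.isCompact_preimage_of_restrictClosure_of_quotientClosureMap N hσ hρp hσp⟩,
    fun hp => ?_⟩
  exact (isProperMap_iff_isCompact_preimage.2 ⟨hσ, hp⟩).isClosed_range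

/-- **Properness and passage to subgroups and quotients.**
Let `σ : G → H` be a continuous homomorphism of locally compact Hausdorff groups, `N` a closed
normal subgroup of `G` with `σ(N)` normal in `H`, `K` the topological closure of `σ(N)`,
`ρ : N → K` the restriction of `σ` and `σ̇ : G ⧸ N → H ⧸ K` the induced homomorphism. Then
`σ` is proper if and only if both `ρ` and `σ̇` are proper; moreover if `σ` is proper then its
range is closed in `H`. -/
theorem proper_iff_restriction_and_quotient_proper
    {G H : Type*}
    [Group G] [TopologicalSpace G] [IsTopologicalGroup G] [LocallyCompactSpace G] [T2Space G]
    [Group H] [TopologicalSpace H] [IsTopologicalGroup H] [LocallyCompactSpace H] [T2Space H]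
    (σ : G →* H) (hσ : Continuous σ)
    (N : Subgroup G) [N.Normal] (hNclosed : IsClosed (N : Set G))
    [(N.map σ).Normal] [((N.map σ).topologicalClosure).Normal] :
    ((∀ K : Set H, IsCompact K → IsCompact (σ ⁻¹' K)) ↔
      ((∀ K : Set ((N.map σ).topologicalClosure), IsCompact K →
          IsCompact ((fun x : N =>
            (⟨σ x, Subgroup.le_topologicalClosure (N.map σ)
              (Subgroup.mem_map_of_mem σ x.2)⟩ : (N.map σ).topologicalClosure)) ⁻¹' K)) ∧
        (∀ K : Set (H ⧸ (N.map σ).topologicalClosure), IsCompact K →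
          IsCompact ((QuotientGroup.map N ((N.map σ).topologicalClosure) σ
            (fun x hx => Subgroup.mem_comap.mpr
              (Subgroup.le_topologicalClosure (N.map σ)
                (Subgroup.mem_map_of_mem σ hx)))) ⁻¹' K)))) ∧
    ((∀ K : Set H, IsCompact K → IsCompact (σ ⁻¹' K)) → IsClosed (Set.range σ)) :=
  proper_iff_restriction_and_quotient_proper_general σ hσ N hNclosed
end

section
/- Let (G, σ, p) be a Brascamp–Lieb datum with BL(G, σ, p) < ∞. Then the homomorphism σ = (σ_1, …, σ_J) : G → G_1 × ⋯ × G_J is a proper map, and for every j, either σ_j : G → G_j is an open map or p_j = ∞. -/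
/-!
Properness: for compact `K` and a compact neighbourhood `V` of `1`, bump functions equal to `1`
on the compact sets `K_j · σ_j(V)` have product `≥ 1` on `σ⁻¹(K) · V°`, so the Brascamp–Lieb
inequality makes this thickening of the closed set `σ⁻¹(K)` of finite Haar measure. Such a set
contains only boundedly many disjoint translates of `V°`, hence is covered by finitely many
translates of `V V⁻¹` and is compact.

Openness: testing the inequality with a bump for an open `U ⊇ σ_j(V)` in the `j`-th slot gives
`μ(V°) ≲ ν_j(U)^{1/p_j}`. If `p_j < ∞`, outer regularity on compact sets forces
`ν_j(σ_j(V)) > 0`, and Steinhaus' theorem makes `σ_j(V) / σ_j(V) = σ_j(V / V)` a neighbourhood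
of `1`.
-/

open MeasureTheory ENNReal

noncomputable section

/-- The Brascamp–Lieb constant associated to measures `μ` on `G`, `ν j` on `Gj j`,
maps `σ j : G → Gj j` and exponents `p j ∈ [1, ∞]`: the least `C ∈ [0, ∞]` such that
`∫⁻ ∏ j, f j (σ j x) ∂μ ≤ C * ∏ j, ‖f j‖_{L^{p j}(ν j)}` for all nonnegative continuous
compactly supported inputs `f j`, with value `∞` if no such finite constant exists. -/
def BLConst {J : Type*} [Fintype J]
    {G : Type*} [TopologicalSpace G] [MeasurableSpace G]
    {Gj : J → Type*} [∀ j, TopologicalSpace (Gj j)] [∀ j, MeasurableSpace (Gj j)]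
    (μ : Measure G) (ν : ∀ j, Measure (Gj j))
    (σ : ∀ j, G → Gj j) (p : J → ℝ≥0∞) : ℝ≥0∞ :=
  sInf {C : ℝ≥0∞ | ∀ f : ∀ j, Gj j → ℝ,
    (∀ j, Continuous (f j)) → (∀ j, HasCompactSupport (f j)) →
    (∀ j, ∀ y, 0 ≤ f j y) →
    ∫⁻ x, ∏ j, ENNReal.ofReal (f j (σ j x)) ∂μ ≤
      C * ∏ j, eLpNorm (f j) (p j) (ν j)}

open Set Filter Topology Function
open scoped Pointwise

section Packing

variable {G : Type*} [Group G] [TopologicalSpace G] [IsTopologicalGroup G]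

theorem exists_finset_card_pairwiseDisjoint_smul_of_not_isCompact {L K : Set G}
    (hL : IsClosed L) (hLc : ¬IsCompact L) (hK : IsCompact K) (n : ℕ) :
    ∃ T : Finset G, ↑T ⊆ L ∧ T.card = n ∧ (T : Set G).PairwiseDisjoint (· • K) := by
  classical
  induction n with
  | zero => exact ⟨∅, by simp, rfl, by simp⟩
  | succ n ih =>
    obtain ⟨T, hTL, hTcard, hT⟩ := ih
    have hcover : IsCompact ((T : Set G) ∪ T * (K * K⁻¹)) :=
      T.finite_toSet.isCompact.union (T.finite_toSet.isCompact.mul (hK.mul hK.inv))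
    obtain ⟨x, hxL, hx⟩ := not_subset.1 fun h => hLc (hcover.of_isClosed_subset hL h)
    have hxT : x ∉ T := fun h => hx (Or.inl h)
    have hdisj : ∀ t ∈ T, Disjoint (x • K) (t • K) := by
      refine fun t ht => disjoint_left.2 ?_
      rintro _ ⟨k, hk, rfl⟩ ⟨k', hk', hkk'⟩
      refine hx (Or.inr ⟨t, ht, k' * k⁻¹, mul_mem_mul hk' (inv_mem_inv.2 hk), ?_⟩)
      simp only [smul_eq_mul] at hkk'
      show t * (k' * k⁻¹) = x
      rw [← mul_assoc, hkk', mul_inv_cancel_right]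
    refine ⟨insert x T, ?_, by rw [Finset.card_insert_of_notMem hxT, hTcard], ?_⟩
    · rw [Finset.coe_insert]
      exact insert_subset hxL hTL
    · rw [Finset.coe_insert]
      exact hT.insert fun t ht _ => hdisj t ht

theorem IsClosed.isCompact_of_measure_mul_ne_top [MeasurableSpace G] [BorelSpace G]
    [LocallyCompactSpace G] (μ : Measure G) [μ.IsMulLeftInvariant] [μ.IsOpenPosMeasure]
    {L W : Set G} (hL : IsClosed L) (hW : W ∈ 𝓝 1) (hLW : μ (L * W) ≠ ∞) : IsCompact L := by
  by_contra hLc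
  obtain ⟨K, ⟨hK1, hK⟩, hKW⟩ := (compact_basis_nhds (1 : G)).mem_iff.1 hW
  have hpos : μ (interior K) ≠ 0 := (μ.measure_pos_of_mem_nhds (interior_mem_nhds.2 hK1)).ne'
  have hpacking (n : ℕ) : n * μ (interior K) ≤ μ (L * W) := by
    obtain ⟨T, hTL, rfl, hT⟩ :=
      exists_finset_card_pairwiseDisjoint_smul_of_not_isCompact hL hLc hK n
    calc (T.card : ℝ≥0∞) * μ (interior K) = ∑ t ∈ T, μ (t • interior K) := by
          simp [measure_smul]
      _ = μ (⋃ t ∈ T, t • interior K) :=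
          (measure_biUnion_finset (hT.mono fun t => smul_set_mono interior_subset)
            fun t _ => (isOpen_interior.smul t).measurableSet).symm
      _ ≤ μ (L * W) := measure_mono <| iUnion₂_subset fun t ht =>
          (smul_set_mono (interior_subset.trans hKW)).trans (smul_set_subset_mul (hTL ht))
  obtain ⟨n, hn⟩ := ENNReal.exists_nat_gt (ENNReal.div_lt_top hLW hpos).ne
  exact (hpacking n).not_gt ((ENNReal.div_lt_iff (Or.inl hpos) (Or.inr hLW)).1 hn)

end Packing

section Haar

variable {H : Type*} [Group H] [TopologicalSpace H] [IsTopologicalGroup H]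
  [LocallyCompactSpace H] [MeasurableSpace H] [BorelSpace H]
  (ν : Measure H) [ν.IsMulLeftInvariant] [IsFiniteMeasureOnCompacts ν]

open Measure in
theorem IsCompact.exists_isOpen_lt_of_lt_of_isMulLeftInvariant {S : Set H} (hS : IsCompact S)
    {r : ℝ≥0∞} (hr : ν S < r) : ∃ U ⊇ S, IsOpen U ∧ ν U < r := by
  obtain ⟨K, hK, hSK⟩ := exists_compact_superset hS
  -- `ν` agrees with a multiple of the regular Haar measure `haar` on relatively compact sets.
  have hν (s : Set H) (hs : IsCompact (closure s)) : ν s = (haarScalarFactor ν haar • haar) s :=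
    measure_isMulInvariant_eq_smul_of_isCompact_closure ν haar hs
  obtain ⟨U, hSU, hU, hUr⟩ := hS.exists_isOpen_lt_of_lt r (by rwa [← hν S hS.closure])
  refine ⟨U ∩ interior K, subset_inter hSU hSK, hU.inter isOpen_interior, ?_⟩
  rw [hν _ (hK.closure_of_subset (inter_subset_right.trans interior_subset))]
  exact (measure_mono inter_subset_left).trans_lt hUr

open Measure in
theorem IsCompact.div_mem_nhds_one_of_measure_ne_zero [T2Space H] {S : Set H} (hS : IsCompact S)
    (hS0 : ν S ≠ 0) : S / S ∈ 𝓝 (1 : H) := by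
  have hhaar : haar S ≠ 0 := fun h => hS0 <| by
    rw [measure_isMulInvariant_eq_smul_of_isCompact_closure ν haar hS.closure, h, smul_zero]
  exact div_mem_nhds_one_of_haar_pos_ne_top haar S hS.measurableSet (pos_iff_ne_zero.2 hhaar)
    hS.measure_lt_top.ne

theorem IsCompact.measure_ne_zero_of_forall_isOpen_le_mul_rpow {S : Set H} (hS : IsCompact S)
    {a M : ℝ≥0∞} {τ : ℝ} (ha : a ≠ 0) (hM : M ≠ ∞) (hτ : 0 < τ)
    (h : ∀ U, IsOpen U → S ⊆ U → a ≤ M * ν U ^ τ) : ν S ≠ 0 := by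
  intro hS0
  have hlim : Tendsto (fun x : ℝ≥0∞ => M * x ^ τ) (𝓝 0) (𝓝 0) := by
    simpa [ENNReal.zero_rpow_of_pos hτ] using
      ENNReal.Tendsto.const_mul ((ENNReal.continuous_rpow_const (y := τ)).tendsto 0) (Or.inr hM)
  obtain ⟨ε, hε, hsmall⟩ :=
    ENNReal.nhds_zero_basis.eventually_iff.1 (hlim.eventually (gt_mem_nhds (pos_iff_ne_zero.2 ha)))
  obtain ⟨U, hSU, hU, hUε⟩ := hS.exists_isOpen_lt_of_lt_of_isMulLeftInvariant ν (hS0 ▸ hε)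
  exact (hsmall hUε).not_ge (h U hU hSU)

end Haar

theorem eLpNorm_le_measure_rpow_of_mem_Icc {X : Type*} [MeasurableSpace X] (ν : Measure X)
    {f : X → ℝ} {U : Set X} (hf : ∀ x, f x ∈ Icc 0 1) (hfU : EqOn f 0 Uᶜ) (p : ℝ≥0∞) :
    eLpNorm f p ν ≤ ν U ^ (1 / p.toReal) :=
  calc eLpNorm f p ν ≤ eLpNorm (U.indicator fun _ => (1 : ℝ)) p ν := by
        refine eLpNorm_mono fun x => ?_
        by_cases hx : x ∈ U
        · simpa [indicator_of_mem hx, abs_of_nonneg (hf x).1] using (hf x).2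
        · simp [hfU hx]
    _ ≤ ‖(1 : ℝ)‖ₑ * ν U ^ (1 / p.toReal) := eLpNorm_indicator_const_le _ _
    _ = ν U ^ (1 / p.toReal) := by simp

section BrascampLieb

variable {J : Type*} [Fintype J] {G : Type*} [MeasurableSpace G]
  {Gj : J → Type*} [∀ j, TopologicalSpace (Gj j)] [∀ j, MeasurableSpace (Gj j)]
  {μ : Measure G} {ν : ∀ j, Measure (Gj j)} {p : J → ℝ≥0∞} {C : ℝ≥0∞}

def IsBLBound (μ : Measure G) (ν : ∀ j, Measure (Gj j)) (σ : ∀ j, G → Gj j) (p : J → ℝ≥0∞)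
    (C : ℝ≥0∞) : Prop :=
  ∀ f : ∀ j, Gj j → ℝ, (∀ j, Continuous (f j)) → (∀ j, HasCompactSupport (f j)) →
    (∀ j, ∀ y, 0 ≤ f j y) →
    ∫⁻ x, ∏ j, ENNReal.ofReal (f j (σ j x)) ∂μ ≤ C * ∏ j, eLpNorm (f j) (p j) (ν j)

theorem exists_isBLBound_of_BLConst_lt_top [TopologicalSpace G] {σ : ∀ j, G → Gj j}
    (h : BLConst μ ν σ p < ∞) : ∃ C < ∞, IsBLBound μ ν σ p C := by
  obtain ⟨C, hC, hCtop⟩ := sInf_lt_iff.1 h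
  exact ⟨C, hCtop, hC⟩

theorem IsBLBound.measure_le {σ : ∀ j, G → Gj j} (hC : IsBLBound μ ν σ p C)
    {f : ∀ j, Gj j → ℝ} (hf : ∀ j, Continuous (f j)) (hfc : ∀ j, HasCompactSupport (f j))
    (hf0 : ∀ j, ∀ y, 0 ≤ f j y) {O : Set G} (hO : MeasurableSet O)
    (hO1 : ∀ x ∈ O, ∀ j, 1 ≤ f j (σ j x)) : μ O ≤ C * ∏ j, eLpNorm (f j) (p j) (ν j) :=
  calc μ O = ∫⁻ _ in O, 1 ∂μ := (setLIntegral_one O).symm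
    _ ≤ ∫⁻ x in O, ∏ j, ENNReal.ofReal (f j (σ j x)) ∂μ :=
        setLIntegral_mono' hO fun x hx =>
          Finset.one_le_prod' fun j _ => ENNReal.one_le_ofReal.2 (hO1 x hx j)
    _ ≤ ∫⁻ x, ∏ j, ENNReal.ofReal (f j (σ j x)) ∂μ := setLIntegral_le_lintegral O _
    _ ≤ C * ∏ j, eLpNorm (f j) (p j) (ν j) := hC f hf hfc hf0

variable [∀ j, LocallyCompactSpace (Gj j)] [∀ j, T2Space (Gj j)]
  [∀ j, OpensMeasurableSpace (Gj j)] [∀ j, IsFiniteMeasureOnCompacts (ν j)]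

theorem IsBLBound.measure_ne_top {σ : ∀ j, G → Gj j} (hC : IsBLBound μ ν σ p C) (hCtop : C ≠ ∞)
    {Q : ∀ j, Set (Gj j)} (hQ : ∀ j, IsCompact (Q j)) {O : Set G} (hO : MeasurableSet O)
    (hOQ : ∀ j, MapsTo (σ j) O (Q j)) : μ O ≠ ∞ := by
  choose f hf1 _ hfc hf01 using fun j =>
    exists_continuous_one_zero_of_isCompact (hQ j) isClosed_empty (disjoint_empty _)
  have hle := hC.measure_le (fun j => (f j).continuous) hfc (fun j y => (hf01 j y).1) hO
    fun x hx j => (hf1 j (hOQ j hx)).ge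
  refine ne_top_of_le_ne_top (ENNReal.mul_ne_top hCtop ?_) hle
  exact (ENNReal.prod_lt_top fun j _ =>
    ((f j).continuous.memLp_of_hasCompactSupport (hfc j)).eLpNorm_lt_top).ne

theorem IsBLBound.exists_le_mul_rpow [TopologicalSpace G] [OpensMeasurableSpace G]
    {σ : ∀ j, G → Gj j} (hC : IsBLBound μ ν σ p C) (hCtop : C ≠ ∞)
    (hσ : ∀ j, Continuous (σ j)) {V : Set G} (hV : IsCompact V) (j : J) : ∃ M ≠ ∞, ∀ U, IsOpen U → σ j '' V ⊆ U →
      μ (interior V) ≤ M * ν j U ^ (1 / (p j).toReal) := by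
  classical
  choose F hF1 _ hFc hF01 using fun i =>
    exists_continuous_one_zero_of_isCompact (hV.image (hσ i)) isClosed_empty (disjoint_empty _)
  set M := ∏ i ∈ Finset.univ.erase j, eLpNorm (F i) (p i) (ν i)
  have hM : M ≠ ∞ := (ENNReal.prod_lt_top fun i _ =>
    ((F i).continuous.memLp_of_hasCompactSupport (hFc i)).eLpNorm_lt_top).ne
  refine ⟨C * M, ENNReal.mul_ne_top hCtop hM, fun U hU hVU => ?_⟩
  obtain ⟨h, hh1, hh0, hhc, hh01⟩ := exists_continuous_one_zero_of_isCompact (hV.image (hσ j))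
    hU.isClosed_compl (disjoint_compl_right_iff_subset.2 hVU)
  set f : ∀ i, Gj i → ℝ := update (fun i => ⇑(F i)) j h
  have hf : ∀ i, Continuous (f i) ∧ HasCompactSupport (f i) ∧ (∀ y, 0 ≤ f i y) ∧
      ∀ x ∈ V, 1 ≤ f i (σ i x) :=
    (forall_update_iff _ (p := fun i (g : Gj i → ℝ) => Continuous g ∧ HasCompactSupport g ∧
      (∀ y, 0 ≤ g y) ∧ ∀ x ∈ V, 1 ≤ g (σ i x))).2
      ⟨⟨h.continuous, hhc, fun y => (hh01 y).1, fun x hx => (hh1 (mem_image_of_mem _ hx)).ge⟩,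
        fun i _ => ⟨(F i).continuous, hFc i, fun y => (hF01 i y).1,
          fun x hx => (hF1 i (mem_image_of_mem _ hx)).ge⟩⟩
  have hprod : ∏ i, eLpNorm (f i) (p i) (ν i) = eLpNorm h (p j) (ν j) * M := by
    rw [← Finset.mul_prod_erase _ _ (Finset.mem_univ j)]
    congr 1
    · simp [f]
    · exact Finset.prod_congr rfl fun i hi => by simp [f, Finset.ne_of_mem_erase hi]
  calc μ (interior V) ≤ C * ∏ i, eLpNorm (f i) (p i) (ν i) :=
        hC.measure_le (fun i => (hf i).1) (fun i => (hf i).2.1) (fun i => (hf i).2.2.1)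
          isOpen_interior.measurableSet fun x hx i => (hf i).2.2.2 x (interior_subset hx)
    _ ≤ C * (ν j U ^ (1 / (p j).toReal) * M) := by
        rw [hprod]
        gcongr
        exact eLpNorm_le_measure_rpow_of_mem_Icc (ν j) hh01 hh0 (p j)
    _ = C * M * ν j U ^ (1 / (p j).toReal) := by ring

variable [Group G] [TopologicalSpace G] [IsTopologicalGroup G] [LocallyCompactSpace G]
  [BorelSpace G] [μ.IsOpenPosMeasure]
  [∀ j, Group (Gj j)] [∀ j, IsTopologicalGroup (Gj j)]

theorem IsBLBound.isCompact_preimage [μ.IsMulLeftInvariant] {σ : ∀ j, G →* Gj j}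
    (hC : IsBLBound μ ν (fun j => σ j) p C) (hCtop : C ≠ ∞) (hσ : ∀ j, Continuous (σ j))
    {K : Set (∀ j, Gj j)} (hK : IsCompact K) :
    IsCompact (MonoidHom.pi σ ⁻¹' K) := by
  obtain ⟨V, hV, hV1⟩ := exists_compact_mem_nhds (1 : G)
  refine (hK.isClosed.preimage (continuous_pi hσ)).isCompact_of_measure_mul_ne_top μ
    (interior_mem_nhds.2 hV1) (hC.measure_ne_top hCtop (Q := fun j => (eval j '' K) * σ j '' V)
      (fun j => (hK.image (continuous_apply j)).mul (hV.image (hσ j)))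
      isOpen_interior.mul_left.measurableSet ?_)
  rintro j _ ⟨l, hl, w, hw, rfl⟩
  rw [map_mul]
  exact mul_mem_mul ⟨_, hl, rfl⟩ (mem_image_of_mem _ (interior_subset hw))

theorem IsBLBound.isOpenMap [∀ j, BorelSpace (Gj j)] [∀ j, (ν j).IsMulLeftInvariant]
    {σ : ∀ j, G →* Gj j} (hC : IsBLBound μ ν (fun j => σ j) p C) (hCtop : C ≠ ∞)
    (hσ : ∀ j, Continuous (σ j)) {j : J} (hp0 : p j ≠ 0) (hp : p j ≠ ∞) : IsOpenMap (σ j) := by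
  refine IsTopologicalGroup.isOpenMap_iff_nhds_one.2 fun s hs => ?_
  obtain ⟨W, hW, -, hWinv, hWW⟩ := exists_closed_nhds_one_inv_eq_mul_subset (mem_map.1 hs)
  obtain ⟨V, ⟨hV1, hV⟩, hVW⟩ := (compact_basis_nhds (1 : G)).mem_iff.1 hW
  have hS : IsCompact (σ j '' V) := hV.image (hσ j)
  obtain ⟨M, hM, hbound⟩ := hC.exists_le_mul_rpow hCtop hσ hV j
  have hS0 : ν j (σ j '' V) ≠ 0 := hS.measure_ne_zero_of_forall_isOpen_le_mul_rpow (ν j)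
    (μ.measure_pos_of_mem_nhds (interior_mem_nhds.2 hV1)).ne' hM
    (one_div_pos.2 (ENNReal.toReal_pos hp0 hp)) hbound
  refine mem_of_superset (hS.div_mem_nhds_one_of_measure_ne_zero (ν j) hS0) ?_
  calc σ j '' V / σ j '' V = σ j '' (V / V) := (image_div _).symm
    _ ⊆ σ j '' (W * W) := by
        refine image_mono ((div_subset_div hVW hVW).trans ?_)
        rw [div_eq_mul_inv, hWinv]
    _ ⊆ s := image_subset_iff.2 hWW

end BrascampLieb

theorem proper_and_open_of_BLConst_lt_top_general
    {J : Type*} [Fintype J]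
    {G : Type*} [Group G] [TopologicalSpace G] [IsTopologicalGroup G] [LocallyCompactSpace G]
    [MeasurableSpace G] [BorelSpace G]
    (μ : Measure G) [μ.IsHaarMeasure]
    {Gj : J → Type*} [∀ j, Group (Gj j)] [∀ j, TopologicalSpace (Gj j)]
    [∀ j, IsTopologicalGroup (Gj j)] [∀ j, LocallyCompactSpace (Gj j)] [∀ j, T2Space (Gj j)]
    [∀ j, MeasurableSpace (Gj j)] [∀ j, BorelSpace (Gj j)]
    (ν : ∀ j, Measure (Gj j)) [∀ j, (ν j).IsHaarMeasure]
    (σ : ∀ j, G →* Gj j) (hσ : ∀ j, Continuous (σ j))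
    (p : J → ℝ≥0∞) (hp : ∀ j, 1 ≤ p j)
    (hBL : BLConst μ ν (fun j => ⇑(σ j)) p < ∞) :
    (∀ K : Set (∀ j, Gj j), IsCompact K → IsCompact (Pi.monoidHom σ ⁻¹' K)) ∧
      ∀ j, IsOpenMap (σ j) ∨ p j = ∞ := by
  obtain ⟨C, hCtop, hC⟩ := exists_isBLBound_of_BLConst_lt_top hBL
  refine ⟨fun K hK => hC.isCompact_preimage hCtop.ne hσ hK, fun j => ?_⟩
  rcases eq_or_ne (p j) ∞ with hpj | hpj
  · exact Or.inr hpj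
  · exact Or.inl (hC.isOpenMap hCtop.ne hσ (zero_lt_one.trans_le (hp j)).ne' hpj)

/-- **Finiteness of the Brascamp–Lieb constant forces properness and openness.**
If `(G, σ, p)` is a Brascamp–Lieb datum of locally compact Hausdorff groups with
`BL(G, σ, p) < ∞`, then the joint homomorphism `(σ_1, …, σ_J) : G → ∏ j, Gj j` is proper, and
for each `j` either `σ j` is an open map or `p j = ∞`. -/
theorem proper_and_open_of_BLConst_lt_top
    {J : Type*} [Fintype J]
    {G : Type*} [Group G] [TopologicalSpace G] [IsTopologicalGroup G] [LocallyCompactSpace G]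
    [T2Space G] [MeasurableSpace G] [BorelSpace G]
    (μ : Measure G) [μ.IsHaarMeasure]
    {Gj : J → Type*} [∀ j, Group (Gj j)] [∀ j, TopologicalSpace (Gj j)]
    [∀ j, IsTopologicalGroup (Gj j)] [∀ j, LocallyCompactSpace (Gj j)] [∀ j, T2Space (Gj j)]
    [∀ j, MeasurableSpace (Gj j)] [∀ j, BorelSpace (Gj j)]
    (ν : ∀ j, Measure (Gj j)) [∀ j, (ν j).IsHaarMeasure]
    (σ : ∀ j, G →* Gj j) (hσ : ∀ j, Continuous (σ j))
    (p : J → ℝ≥0∞) (hp : ∀ j, 1 ≤ p j)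
    (hBL : BLConst μ ν (fun j => ⇑(σ j)) p < ∞) :
    (∀ K : Set (∀ j, Gj j), IsCompact K → IsCompact (Pi.monoidHom σ ⁻¹' K)) ∧
      ∀ j, IsOpenMap (σ j) ∨ p j = ∞ :=
  proper_and_open_of_BLConst_lt_top_general μ ν σ hσ p hp hBL

end
end

section
/- Let (G, σ, p) be a Brascamp–Lieb datum. If ⋂_{j=1}^J ker σ_j is not a compact subgroup of G, then BL(G, σ, p) = ∞. -/
/-! Let `H = ⋂ ker σ_j` and let each `f_j` be a bump equal to `1` near the identity of `G_j`.
The integrand `∏ f_j ∘ σ_j` is left `H`-invariant and equals `1` near `1`, hence on `H * U` for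
a neighbourhood `U` of `1`. Since `H` is closed and noncompact, greedily chosen points of `H`
give infinitely many disjoint left translates of a compact neighbourhood of `1` inside `H * U`,
so the integral is infinite while every `‖f_j‖_{p_j}` is finite. -/

open MeasureTheory ENNReal

noncomputable section

open Set Pointwise Filter Topology Function

theorem disjoint_smul_smul_of_notMem_smul_mul_inv {G : Type*} [Group G] {K : Set G} {x y : G}
    (h : y ∉ x • (K * K⁻¹)) : Disjoint (x • K) (y • K) := by
  rw [Set.disjoint_left]
  rintro _ ⟨a, ha, rfl⟩ ⟨b, hb, hab⟩
  refine h ⟨a * b⁻¹, mul_mem_mul ha (inv_mem_inv.mpr hb), ?_⟩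
  simp only [smul_eq_mul] at hab ⊢
  rw [← mul_assoc, ← hab, mul_inv_cancel_right]

section Translates

variable {G : Type*} [Group G] [TopologicalSpace G] [IsTopologicalGroup G]

theorem exists_pairwise_disjoint_smul_of_not_isCompact {S K : Set G} (hS : IsClosed S)
    (hS' : ¬ IsCompact S) (hK : IsCompact K) :
    ∃ g : ℕ → G, (∀ n, g n ∈ S) ∧ Pairwise (Disjoint on fun n => g n • K) := by
  have : Std.Symm (fun x y : G => Disjoint (x • K) (y • K)) := ⟨fun _ _ h => h.symm⟩
  refine exists_seq_of_forall_finset_exists' (· ∈ S) (fun x y => Disjoint (x • K) (y • K))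
    fun s _ => ?_
  have hcover : IsCompact (⋃ x ∈ s, x • (K * K⁻¹)) :=
    s.finite_toSet.isCompact_biUnion fun x _ => (hK.mul hK.inv).smul x
  obtain ⟨y, hyS, hy⟩ := not_subset.mp fun hsub => hS' (hcover.of_isClosed_subset hS hsub)
  exact ⟨y, hyS, fun x hx => disjoint_smul_smul_of_notMem_smul_mul_inv
    fun hmem => hy (mem_biUnion hx hmem)⟩

variable [WeaklyLocallyCompactSpace G] [MeasurableSpace G] [OpensMeasurableSpace G]

theorem measure_mul_eq_top_of_not_isCompact (μ : Measure G) [μ.IsOpenPosMeasure]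
    [μ.IsMulLeftInvariant] {S U : Set G} (hS : IsClosed S) (hS' : ¬ IsCompact S)
    (hU : U ∈ 𝓝 (1 : G)) : μ (S * U) = ∞ := by
  obtain ⟨K, ⟨hK1, hK, hKcl⟩, hKU⟩ := (isCompact_isClosed_basis_nhds (1 : G)).mem_iff.1 hU
  obtain ⟨g, hgS, hdisj⟩ := exists_pairwise_disjoint_smul_of_not_isCompact hS hS' hK
  have hsub : (⋃ n, g n • K) ⊆ S * U :=
    iUnion_subset fun n => smul_set_subset_mul (hgS n) |>.trans' (smul_set_mono hKU)
  refine top_unique (le_of_eq_of_le ?_ (measure_mono hsub))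
  rw [measure_iUnion hdisj fun n => (hKcl.smul (g n)).measurableSet]
  simp only [measure_smul]
  exact (ENNReal.tsum_const_eq_top_of_ne_zero (μ.measure_pos_of_mem_nhds hK1).ne').symm

end Translates

theorem exists_continuous_hasCompactSupport_eventuallyEq_one {X : Type*} [TopologicalSpace X]
    [RegularSpace X] [LocallyCompactSpace X] (x : X) :
    ∃ f : X → ℝ, Continuous f ∧ HasCompactSupport f ∧ (∀ y, 0 ≤ f y) ∧ f =ᶠ[𝓝 x] 1 := by
  obtain ⟨K, hK, hKx⟩ := exists_compact_mem_nhds x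
  obtain ⟨f, hf1, -, hfs, hf01⟩ :=
    exists_continuous_one_zero_of_isCompact hK isClosed_empty (disjoint_empty K)
  exact ⟨f, f.continuous, hfs, fun y => (hf01 y).1, eventually_of_mem hKx hf1⟩

theorem BLConst_eq_top_of_lintegral_eq_top {J : Type*} [Fintype J]
    {G : Type*} [TopologicalSpace G] [MeasurableSpace G]
    {Gj : J → Type*} [∀ j, TopologicalSpace (Gj j)] [∀ j, MeasurableSpace (Gj j)]
    [∀ j, OpensMeasurableSpace (Gj j)]
    (μ : Measure G) (ν : ∀ j, Measure (Gj j)) [∀ j, IsFiniteMeasureOnCompacts (ν j)]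
    (σ : ∀ j, G → Gj j) (p : J → ℝ≥0∞) (f : ∀ j, Gj j → ℝ)
    (hfc : ∀ j, Continuous (f j)) (hfs : ∀ j, HasCompactSupport (f j)) (hf0 : ∀ j y, 0 ≤ f j y)
    (hf : ∫⁻ x, ∏ j, ENNReal.ofReal (f j (σ j x)) ∂μ = ∞) :
    BLConst μ ν σ p = ∞ := by
  refine sInf_eq_top.mpr fun C hC => ?_
  have hnorm : ∏ j, eLpNorm (f j) (p j) (ν j) ≠ ∞ :=
    (ENNReal.prod_lt_top fun j _ => ((hfc j).memLp_of_hasCompactSupport (hfs j)).2).ne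
  by_contra hC_ne
  exact ENNReal.mul_ne_top hC_ne hnorm (top_unique (hf ▸ hC f hfc hfs hf0))

theorem BLConst_eq_top_of_not_isCompact_ker_general
    {J : Type*} [Fintype J]
    {G : Type*} [Group G] [TopologicalSpace G] [IsTopologicalGroup G] [LocallyCompactSpace G]
    [MeasurableSpace G] [BorelSpace G]
    (μ : Measure G) [μ.IsHaarMeasure]
    {Gj : J → Type*} [∀ j, Group (Gj j)] [∀ j, TopologicalSpace (Gj j)]
    [∀ j, LocallyCompactSpace (Gj j)] [∀ j, T2Space (Gj j)]
    [∀ j, MeasurableSpace (Gj j)] [∀ j, BorelSpace (Gj j)]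
    (ν : ∀ j, Measure (Gj j)) [∀ j, (ν j).IsHaarMeasure]
    (σ : ∀ j, G →* Gj j) (hσ : ∀ j, Continuous (σ j))
    (p : J → ℝ≥0∞) (hker : ¬ IsCompact ((⨅ j, (σ j).ker : Subgroup G) : Set G)) :
    BLConst μ ν (fun j => ⇑(σ j)) p = ∞ := by
  set H : Subgroup G := ⨅ j, (σ j).ker
  have hH : IsClosed (H : Set G) := by
    simpa only [H, Subgroup.coe_iInf, MonoidHom.coe_ker] using
      isClosed_iInter fun j => isClosed_singleton.preimage (hσ j)
  choose f hfc hfs hf0 hf1 using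
    fun j => exists_continuous_hasCompactSupport_eventuallyEq_one (1 : Gj j)
  set F : G → ℝ≥0∞ := fun x => ∏ j, ENNReal.ofReal (f j (σ j x))
  have hF_inv : ∀ h ∈ H, ∀ x, F (h * x) = F x := fun h hh x => by
    have hσh : ∀ j, σ j h = 1 := Subgroup.mem_iInf.mp hh
    simp only [F, map_mul, hσh, one_mul]
  have hF : Measurable F :=
    Finset.measurable_prod _ fun j _ => ((hfc j).comp (hσ j)).measurable.ennreal_ofReal
  have hF1 : {x | F x = 1} ∈ 𝓝 (1 : G) := by
    filter_upwards [eventually_all.2 fun j => (hσ j).tendsto' 1 1 (map_one _) |>.eventually (hf1 j)]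
      with x hx
    simp [F, hx]
  have hsub : (H : Set G) * {x | F x = 1} ⊆ {x | 1 ≤ F x} := by
    rintro _ ⟨h, hh, x, hx, rfl⟩
    exact ((hF_inv h hh x).trans hx).ge
  refine BLConst_eq_top_of_lintegral_eq_top μ ν _ p f hfc hfs hf0 (top_unique ?_)
  calc ∞ = μ ((H : Set G) * {x | F x = 1}) :=
        (measure_mul_eq_top_of_not_isCompact μ hH hker hF1).symm
    _ ≤ μ {x | 1 ≤ F x} := measure_mono hsub
    _ ≤ ∫⁻ x, F x ∂μ := by simpa using mul_meas_ge_le_lintegral₀ hF.aemeasurable 1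

/-- **Noncompact joint kernel forces an infinite Brascamp–Lieb constant.**
If `(G, σ, p)` is a Brascamp–Lieb datum of locally compact Hausdorff groups and the joint
kernel `⋂ j, ker (σ j)` is not compact, then `BL(G, σ, p) = ∞`. -/
theorem BLConst_eq_top_of_not_isCompact_ker
    {J : Type*} [Fintype J]
    {G : Type*} [Group G] [TopologicalSpace G] [IsTopologicalGroup G] [LocallyCompactSpace G]
    [T2Space G] [MeasurableSpace G] [BorelSpace G]
    (μ : Measure G) [μ.IsHaarMeasure]
    {Gj : J → Type*} [∀ j, Group (Gj j)] [∀ j, TopologicalSpace (Gj j)]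
    [∀ j, IsTopologicalGroup (Gj j)] [∀ j, LocallyCompactSpace (Gj j)] [∀ j, T2Space (Gj j)]
    [∀ j, MeasurableSpace (Gj j)] [∀ j, BorelSpace (Gj j)]
    (ν : ∀ j, Measure (Gj j)) [∀ j, (ν j).IsHaarMeasure]
    (σ : ∀ j, G →* Gj j) (hσ : ∀ j, Continuous (σ j))
    (p : J → ℝ≥0∞) (hp : ∀ j, 1 ≤ p j)
    (hker : ¬ IsCompact ((⨅ j, (σ j).ker : Subgroup G) : Set G)) :
    BLConst μ ν (fun j => ⇑(σ j)) p = ∞ :=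
  BLConst_eq_top_of_not_isCompact_ker_general μ ν σ hσ p hker

end
end

section
/- Let (G, σ, p) be a Brascamp–Lieb datum, let N be a closed normal subgroup of G, and suppose that for each j the image σ_j(N) is a closed normal subgroup of G_j. Equip N and G/N with Haar measures so that the Haar measures on G, N, and G/N satisfy the Weil quotient integral formula, and for each j equip σ_j(N) and G_j/σ_j(N) with Haar measures so that the Haar measures on G_j, σ_j(N), and G_j/σ_j(N) satisfy the Weil quotient integral formula. Let σ|_N denote the family of restricted homomorphisms N → σ_j(N), and let σ̇ denote the family of induced homomorphisms G/N → G_j/σ_j(N). Then BL(G, σ, p) ≤ BL(N, σ|_N, p) · BL(G/N, σ̇, p). -/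
/-!
Fix admissible inputs `f j`. Testing the Weil formula on `G` against compactly supported
minorants of `x ↦ ∏ j, f j (σ j x)` (enough, because a Haar measure agrees on open sets with a
regular one) bounds `∫_G ∏ f_j ∘ σ_j` by `∫_{G/N} ∫_N ∏ f_j (σ_j (x y)) dy d(xN)`. For fixed `x`
the inner integral is a Brascamp–Lieb integral on `N` for the slices `z ↦ f_j (σ_j x * z)` on
`σ_j N`, so it is at most `BL(N) ∏ ‖f_j (σ_j x * ·)‖_{p_j}`. These slice norms are dominated by
continuous compactly supported functions `h_j` on `G_j ⧸ σ_j N`: the `L^{p_j}` norm over the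
coset when `p_j < ∞`, a bump of height `‖f_j‖_∞` when `p_j = ∞`. The Weil formula on `G_j`
gives `‖h_j‖_{p_j} ≤ ‖f_j‖_{p_j}`, and applying `BL(G/N)` to the `h_j` gives the bound.
-/

open MeasureTheory ENNReal

noncomputable section

/-- The Weil quotient integral formula for measures `μ` on `G`, `ν` on a subgroup `N`, and
`μq` on the quotient `G ⧸ N`:
`∫_G f = ∫_{G ⧸ N} ∫_N f (x y) dν(y) dμq(xN)` for all continuous compactly supported `f`. -/
def WeilFormula {G : Type*} [Group G] [TopologicalSpace G] [MeasurableSpace G]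
    (N : Subgroup G) (μ : Measure G) (ν : Measure N) (μq : Measure (G ⧸ N)) : Prop :=
  ∀ f : G → ℝ, Continuous f → HasCompactSupport f →
    ∫ x, f x ∂μ = ∫ q : G ⧸ N, ∫ y : N, f (Quotient.out q * (y : G)) ∂ν ∂μq

theorem iSup_ite_ofReal_min {a : ℝ} (ha : 0 ≤ a) :
    ⨆ n : ℕ, (if 1 / (n + 1 : ℝ) < a then ENNReal.ofReal (min a (n + 1)) else 0) =
      ENNReal.ofReal a := by
  refine le_antisymm (iSup_le fun n => ?_) ?_
  · split_ifs
    exacts [ENNReal.ofReal_le_ofReal (min_le_left _ _), zero_le]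
  rcases ha.eq_or_lt with rfl | hpos
  · simp
  obtain ⟨n₁, hn₁⟩ := exists_nat_one_div_lt hpos
  obtain ⟨n₂, hn₂⟩ := exists_nat_ge a
  refine le_iSup_of_le (max n₁ n₂) (le_of_eq ?_)
  have hlt : 1 / ((max n₁ n₂ : ℕ) + 1 : ℝ) < a :=
    lt_of_le_of_lt (by gcongr; exact le_max_left _ _) hn₁
  have hle : a ≤ (max n₁ n₂ : ℕ) + 1 := by
    have : (n₂ : ℝ) ≤ max n₁ n₂ := by exact_mod_cast le_max_right _ _
    linarith
  rw [if_pos hlt, min_eq_left hle]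

section Approximation

variable {X : Type*} [TopologicalSpace X] [MeasurableSpace X]

theorem lintegral_ofReal_eq_of_forall_isOpen [OpensMeasurableSpace X] {ρ ρ' : Measure X}
    (h : ∀ U, IsOpen U → ρ U = ρ' U) {F : X → ℝ} (hF : Continuous F) (hF0 : 0 ≤ F) :
    ∫⁻ x, ENNReal.ofReal (F x) ∂ρ = ∫⁻ x, ENNReal.ofReal (F x) ∂ρ' := by
  rw [lintegral_eq_lintegral_meas_lt ρ (.of_forall hF0) hF.aemeasurable,
    lintegral_eq_lintegral_meas_lt ρ' (.of_forall hF0) hF.aemeasurable]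
  exact lintegral_congr fun t => h _ (isOpen_lt continuous_const hF)

variable [T2Space X] [BorelSpace X] {ρ : Measure X}

theorem setLIntegral_le_of_forall_isCompact [ρ.Regular] {V : Set X} (hV : IsOpen V)
    {h : X → ℝ≥0∞} {δ c : ℝ≥0∞} (hδ : δ ≠ 0) (hc : c ≠ ∞) (hδh : ∀ x ∈ V, δ ≤ h x)
    (hhc : ∀ x, h x ≤ c) {T : ℝ≥0∞} (hT : ∀ K ⊆ V, IsCompact K → ∫⁻ x in K, h x ∂ρ ≤ T) :
    ∫⁻ x in V, h x ∂ρ ≤ T := by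
  rcases eq_or_ne (ρ V) ∞ with hVtop | hVtop
  · -- A lower bound `δ` on an open set of infinite measure forces `T = ∞`.
    have hδV : δ * ρ V ≤ T := by
      simp_rw [hV.measure_eq_iSup_isCompact, ENNReal.mul_iSup]
      refine iSup₂_le fun K hKV => iSup_le fun hK => (hT K hKV hK).trans' ?_
      calc δ * ρ K = ∫⁻ _ in K, δ ∂ρ := (setLIntegral_const K δ).symm
        _ ≤ ∫⁻ x in K, h x ∂ρ := setLIntegral_mono' hK.measurableSet fun x hx => hδh x (hKV hx)
    rw [hVtop, ENNReal.mul_top hδ] at hδV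
    exact le_top.trans hδV
  · refine ENNReal.le_of_forall_pos_le_add fun ε hε _ => ?_
    obtain ⟨K, hKV, hK, hVK⟩ := hV.measurableSet.exists_isCompact_sdiff_lt hVtop
      (ENNReal.div_ne_zero.2 ⟨ENNReal.coe_ne_zero.2 hε.ne', hc⟩ : (ε : ℝ≥0∞) / c ≠ 0)
    calc ∫⁻ x in V, h x ∂ρ = ∫⁻ x in K ∪ V \ K, h x ∂ρ := by rw [Set.union_sdiff_cancel hKV]
      _ ≤ ∫⁻ x in K, h x ∂ρ + ∫⁻ x in V \ K, h x ∂ρ := lintegral_union_le _ _ _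
      _ ≤ T + c * (ε / c) := by
        gcongr
        · exact hT K hKV hK
        · calc ∫⁻ x in V \ K, h x ∂ρ ≤ ∫⁻ _ in V \ K, c ∂ρ := lintegral_mono fun x => hhc x
            _ = c * ρ (V \ K) := setLIntegral_const _ c
            _ ≤ c * (ε / c) := by gcongr
      _ ≤ T + ε := by gcongr; exact ENNReal.mul_div_le

theorem setLIntegral_ofReal_min_le [LocallyCompactSpace X] {F : X → ℝ} (hF : Continuous F)
    (hF0 : 0 ≤ F) {T : ℝ≥0∞} (hT : ∀ g : X → ℝ, Continuous g → HasCompactSupport g → 0 ≤ g → g ≤ F →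
      ∫⁻ x, ENNReal.ofReal (g x) ∂ρ ≤ T) {K : Set X} (hK : IsCompact K) {c : ℝ} (hc : 0 ≤ c) :
    ∫⁻ x in K, ENNReal.ofReal (min (F x) c) ∂ρ ≤ T := by
  obtain ⟨u, hu1, -, hus, hu01⟩ :=
    exists_continuous_one_zero_of_isCompact hK isClosed_empty (Set.disjoint_empty K)
  set g : X → ℝ := fun x => min (F x) (c * u x)
  have hgs : HasCompactSupport g := by
    refine (hus.mul_left (f := fun _ => c)).mono fun x hx h0 => hx ?_
    simp only [g, Pi.mul_apply] at h0 ⊢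
    rw [h0]
    exact min_eq_right (hF0 x)
  calc ∫⁻ x in K, ENNReal.ofReal (min (F x) c) ∂ρ = ∫⁻ x in K, ENNReal.ofReal (g x) ∂ρ :=
        setLIntegral_congr_fun hK.measurableSet fun x hx => by simp [g, hu1 hx]
    _ ≤ ∫⁻ x, ENNReal.ofReal (g x) ∂ρ := setLIntegral_le_lintegral _ _
    _ ≤ T := hT g (hF.min (continuous_const.mul u.continuous)) hgs
        (fun x => le_min (hF0 x) (mul_nonneg hc (hu01 x).1)) fun x => min_le_left _ _

theorem lintegral_ofReal_le_of_forall_hasCompactSupport [LocallyCompactSpace X] [ρ.Regular]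
    {F : X → ℝ} (hF : Continuous F) (hF0 : 0 ≤ F) {T : ℝ≥0∞}
    (hT : ∀ g : X → ℝ, Continuous g → HasCompactSupport g → 0 ≤ g → g ≤ F →
      ∫⁻ x, ENNReal.ofReal (g x) ∂ρ ≤ T) :
    ∫⁻ x, ENNReal.ofReal (F x) ∂ρ ≤ T := by
  set V : ℕ → Set X := fun n => {x | 1 / (n + 1 : ℝ) < F x}
  -- Truncations of `F`, bounded above and, on their open supports, below; they increase to `F`.
  set φ : ℕ → X → ℝ≥0∞ := fun n => (V n).indicator fun x => ENNReal.ofReal (min (F x) (n + 1))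
  have hV : ∀ n, IsOpen (V n) := fun n => isOpen_lt continuous_const hF
  have hφ : ∀ n, Measurable (φ n) := fun n =>
    (ENNReal.measurable_ofReal.comp (hF.min continuous_const).measurable).indicator
      (hV n).measurableSet
  have hφmono : Monotone φ := by
    intro m n hmn x
    have hVmn : V m ⊆ V n := fun y (hy : 1 / (m + 1 : ℝ) < F y) =>
      show 1 / (n + 1 : ℝ) < F y from lt_of_le_of_lt (by gcongr) hy
    calc φ m x ≤ (V m).indicator (fun x => ENNReal.ofReal (min (F x) (n + 1))) x :=
          Set.indicator_le_indicator (by gcongr)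
      _ ≤ φ n x := Set.indicator_le_indicator_of_subset hVmn (fun _ => zero_le) x
  have hsup : ∀ x, ⨆ n, φ n x = ENNReal.ofReal (F x) := fun x => by
    simpa only [φ, V, Set.indicator_apply, Set.mem_ofPred_eq] using iSup_ite_ofReal_min (hF0 x)
  calc ∫⁻ x, ENNReal.ofReal (F x) ∂ρ = ∫⁻ x, ⨆ n, φ n x ∂ρ := by simp_rw [hsup]
    _ = ⨆ n, ∫⁻ x, φ n x ∂ρ := lintegral_iSup hφ hφmono
    _ ≤ T := iSup_le fun n => by
      rw [lintegral_indicator (hV n).measurableSet]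
      have hδ : (1 / (n + 1) : ℝ) ≤ n + 1 := by
        rw [div_le_iff₀ (by positivity)]; nlinarith
      refine setLIntegral_le_of_forall_isCompact (hV n)
        (ENNReal.ofReal_pos.2 (by positivity : (0 : ℝ) < 1 / (n + 1))).ne'
        ENNReal.ofReal_ne_top
        (fun x (hx : _ < _) => ENNReal.ofReal_le_ofReal (le_min hx.le hδ))
        (fun x => ENNReal.ofReal_le_ofReal (min_le_right _ _))
        fun K _ hK => setLIntegral_ofReal_min_le hF hF0 hT hK (by positivity)

end Approximation

theorem lintegral_ofReal_le_of_forall_hasCompactSupport_of_isHaarMeasure {G : Type*} [Group G]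
    [TopologicalSpace G] [IsTopologicalGroup G] [LocallyCompactSpace G] [T2Space G]
    [MeasurableSpace G] [BorelSpace G] (μ : Measure G) [μ.IsHaarMeasure] {F : G → ℝ}
    (hF : Continuous F) (hF0 : 0 ≤ F) {T : ℝ≥0∞}
    (hT : ∀ g : G → ℝ, Continuous g → HasCompactSupport g → 0 ≤ g → g ≤ F →
      ∫⁻ x, ENNReal.ofReal (g x) ∂μ ≤ T) :
    ∫⁻ x, ENNReal.ofReal (F x) ∂μ ≤ T := by
  -- `μ` need not be regular, but it agrees on open sets with a multiple of the regular `haar`.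
  have hμ : ∀ U, IsOpen U → μ U = (μ.haarScalarFactor Measure.haar • Measure.haar) U :=
    fun U hU => Measure.measure_isHaarMeasure_eq_smul_of_isOpen μ _ hU
  rw [lintegral_ofReal_eq_of_forall_isOpen hμ hF hF0]
  exact lintegral_ofReal_le_of_forall_hasCompactSupport hF hF0 fun g hg hgs hg0 hgF =>
    (lintegral_ofReal_eq_of_forall_isOpen hμ hg hg0).symm.trans_le (hT g hg hgs hg0 hgF)

instance QuotientGroup.opensMeasurableSpace {X : Type*} [Group X] [TopologicalSpace X]
    [MeasurableSpace X] [OpensMeasurableSpace X] (M : Subgroup X) :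
    OpensMeasurableSpace (X ⧸ M) where
  borel_le := MeasurableSpace.generateFrom_le fun _ hU =>
    measurableSet_quotient.2 (hU.preimage QuotientGroup.continuous_mk).measurableSet

theorem QuotientGroup.continuous_map {G H : Type*} [Group G] [Group H] [TopologicalSpace G]
    [TopologicalSpace H] {N : Subgroup G} {M : Subgroup H} [N.Normal] [M.Normal] {f : G →* H}
    (hf : Continuous f) (h : N ≤ M.comap f) : Continuous (QuotientGroup.map N M f h) :=
  (QuotientGroup.isQuotientMap_mk N).continuous_iff.2 (QuotientGroup.continuous_mk.comp hf)

section Fiber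

variable {X : Type*} [Group X] [TopologicalSpace X] [IsTopologicalGroup X] {M : Subgroup X}

theorem HasCompactSupport.comp_mul_left_subgroup (hM : IsClosed (M : Set X)) {g : X → ℝ}
    (hg : HasCompactSupport g) (x : X) : HasCompactSupport fun z : M => g (x * z) :=
  hg.comp_isClosedEmbedding ((Homeomorph.mulLeft x).isClosedEmbedding.comp
    hM.isClosedEmbedding_subtypeVal)

variable [MeasurableSpace X]

-- The representative `w.out` matches `WeilFormula`; by `fiberIntegral_mk` it is immaterial.
def fiberIntegral (ω : Measure M) (g : X → ℝ) (w : X ⧸ M) : ℝ :=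
  ∫ z : M, g (w.out * z) ∂ω

theorem hasCompactSupport_fiberIntegral [M.Normal] (ω : Measure M) (hM : IsClosed (M : Set X))
    {g : X → ℝ} (hgs : HasCompactSupport g) : HasCompactSupport (fiberIntegral ω g) := by
  have : T3Space (X ⧸ M) := @QuotientGroup.instT3Space _ _ _ _ M _ hM
  refine HasCompactSupport.intro (hgs.image QuotientGroup.continuous_mk) fun w hw => ?_
  have hzero : ∀ z : M, g (w.out * z) = 0 := fun z =>
    image_eq_zero_of_notMem_tsupport fun hz => hw ⟨_, hz, by simp⟩
  simp [fiberIntegral, hzero]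

variable [BorelSpace X]

theorem fiberIntegral_mk (ω : Measure M) [ω.IsMulLeftInvariant] (g : X → ℝ) (x : X) :
    fiberIntegral ω g (x : X ⧸ M) = ∫ z : M, g (x * z) ∂ω := by
  obtain ⟨n, hn⟩ : ∃ n : M, (x : X ⧸ M).out = x * n :=
    ⟨⟨x⁻¹ * (x : X ⧸ M).out, QuotientGroup.eq.1 (QuotientGroup.out_eq' _).symm⟩, by simp⟩
  simp only [fiberIntegral, hn, mul_assoc]
  exact integral_mul_left_eq_self (fun z : M => g (x * z)) n

variable [LocallyCompactSpace X]

theorem continuous_integral_mul_left_subgroup (ω : Measure M) [IsFiniteMeasureOnCompacts ω]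
    (hM : IsClosed (M : Set X)) {g : X → ℝ} (hg : Continuous g) (hgs : HasCompactSupport g) :
    Continuous fun x : X => ∫ z : M, g (x * z) ∂ω := by
  refine continuous_iff_continuousAt.2 fun x₀ => ?_
  obtain ⟨t, ht, hxt⟩ := exists_compact_mem_nhds x₀
  refine ContinuousOn.continuousAt ?_ hxt
  refine continuousOn_integral_of_compact_support
    (hM.isClosedEmbedding_subtypeVal.isCompact_preimage (ht.inv.mul hgs))
    (hg.comp (continuous_fst.mul (continuous_subtype_val.comp continuous_snd))).continuousOn ?_
  intro x z hx hz
  refine image_eq_zero_of_notMem_tsupport fun hxz => hz ?_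
  simpa using Set.mul_mem_mul (Set.inv_mem_inv.2 hx) hxz

theorem continuous_fiberIntegral (ω : Measure M) [ω.IsMulLeftInvariant]
    [IsFiniteMeasureOnCompacts ω]
    (hM : IsClosed (M : Set X)) {g : X → ℝ} (hg : Continuous g) (hgs : HasCompactSupport g) :
    Continuous (fiberIntegral ω g) := by
  refine (QuotientGroup.isQuotientMap_mk M).continuous_iff.2 ?_
  simpa [Function.comp_def, fiberIntegral_mk] using
    continuous_integral_mul_left_subgroup ω hM hg hgs

end Fiber

section Lp

variable {X : Type*} [MeasurableSpace X]

theorem ofReal_integral_le_lintegral_ofReal {ρ : Measure X} {f : X → ℝ} (hf0 : 0 ≤ f) :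
    ENNReal.ofReal (∫ x, f x ∂ρ) ≤ ∫⁻ x, ENNReal.ofReal (f x) ∂ρ := by
  by_cases hf : Integrable f ρ
  · exact (ofReal_integral_eq_lintegral_ofReal hf (.of_forall hf0)).le
  · simp [integral_undef hf]

theorem eLpNorm_eq_lintegral_ofReal_rpow {ρ : Measure X} {f : X → ℝ} (hf0 : 0 ≤ f)
    {p : ℝ≥0∞} (hp0 : p ≠ 0) (hp : p ≠ ∞) :
    eLpNorm f p ρ = (∫⁻ x, ENNReal.ofReal (f x ^ p.toReal) ∂ρ) ^ (1 / p.toReal) := by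
  simp_rw [eLpNorm_eq_lintegral_rpow_enorm_toReal hp0 hp, Real.enorm_eq_ofReal (hf0 _),
    ENNReal.ofReal_rpow_of_nonneg (hf0 _) ENNReal.toReal_nonneg]

theorem Continuous.enorm_le_eLpNormEssSup [TopologicalSpace X] {E : Type*}
    [NormedAddCommGroup E] (ρ : Measure X) [ρ.IsOpenPosMeasure] {f : X → E} (hf : Continuous f)
    (x : X) : ‖f x‖ₑ ≤ eLpNormEssSup f ρ := by
  by_contra! h
  refine (isOpen_lt continuous_const hf.enorm).measure_ne_zero ρ ⟨x, h⟩ ?_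
  simpa only [not_le] using ae_iff.1 (ae_le_eLpNormEssSup (f := f) (μ := ρ))

end Lp

section Majorant

variable {X : Type*} [Group X] [TopologicalSpace X] [IsTopologicalGroup X] [LocallyCompactSpace X]
  [MeasurableSpace X] [BorelSpace X] {M : Subgroup X} [M.Normal]

theorem exists_quotient_majorant_top (hM : IsClosed (M : Set X)) (ν : Measure X)
    [ν.IsOpenPosMeasure] [IsFiniteMeasureOnCompacts ν] (ω : Measure M) (νQ : Measure (X ⧸ M))
    {f : X → ℝ} (hf : Continuous f) (hfs : HasCompactSupport f) (hf0 : 0 ≤ f) :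
    ∃ h : X ⧸ M → ℝ, Continuous h ∧ HasCompactSupport h ∧ 0 ≤ h ∧
      (∀ x : X, eLpNorm (fun z : M => f (x * z)) ∞ ω ≤ ENNReal.ofReal (h x)) ∧
      eLpNorm h ∞ νQ ≤ eLpNorm f ∞ ν := by
  have : T3Space (X ⧸ M) := @QuotientGroup.instT3Space _ _ _ _ M _ hM
  have hfin : eLpNorm f ∞ ν ≠ ∞ := (hf.memLp_of_hasCompactSupport hfs).eLpNorm_ne_top
  set C := (eLpNorm f ∞ ν).toReal
  have hC : 0 ≤ C := ENNReal.toReal_nonneg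
  have hfC : ∀ x, f x ≤ C := fun x => by
    have := hf.enorm_le_eLpNormEssSup ν x
    rw [Real.enorm_eq_ofReal_abs, ← eLpNorm_exponent_top,
      ENNReal.ofReal_le_iff_le_toReal hfin] at this
    exact (le_abs_self _).trans this
  obtain ⟨u, hu1, -, hus, hu01⟩ := exists_continuous_one_zero_of_isCompact
    (hfs.image (QuotientGroup.continuous_mk (N := M))) isClosed_empty (Set.disjoint_empty _)
  refine ⟨fun w => C * u w, continuous_const.mul u.continuous, hus.mul_left,
    fun w => mul_nonneg hC (hu01 w).1, fun x => ?_, ?_⟩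
  · -- `f` vanishes on the coset `x M` unless it meets `tsupport f`, where `u = 1`.
    refine eLpNormEssSup_le_of_ae_bound (.of_forall fun z => ?_)
    rw [Real.norm_eq_abs, abs_of_nonneg (hf0 _)]
    by_cases hz : x * (z : X) ∈ tsupport f
    · have : u (x : X ⧸ M) = 1 := by simpa using hu1 ⟨_, hz, QuotientGroup.mk_mul_of_mem x z.2⟩
      simpa [this] using hfC _
    · rw [image_eq_zero_of_notMem_tsupport hz]
      exact mul_nonneg hC (hu01 _).1
  · rw [eLpNorm_exponent_top, ← ENNReal.ofReal_toReal hfin]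
    refine eLpNormEssSup_le_of_ae_bound (.of_forall fun w => ?_)
    rw [Real.norm_eq_abs, abs_of_nonneg (mul_nonneg hC (hu01 w).1)]
    exact mul_le_of_le_one_right hC (hu01 w).2

theorem exists_quotient_majorant_of_ne_top (hM : IsClosed (M : Set X)) (ν : Measure X)
    [IsFiniteMeasureOnCompacts ν] (ω : Measure M) [ω.IsMulLeftInvariant]
    [IsFiniteMeasureOnCompacts ω] (νQ : Measure (X ⧸ M)) [IsFiniteMeasureOnCompacts νQ]
    (hW : WeilFormula M ν ω νQ) {p : ℝ≥0∞} (hp0 : p ≠ 0) (hp : p ≠ ∞) {f : X → ℝ} (hf : Continuous f) (hfs : HasCompactSupport f) (hf0 : 0 ≤ f) :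
    ∃ h : X ⧸ M → ℝ, Continuous h ∧ HasCompactSupport h ∧ 0 ≤ h ∧
      (∀ x : X, eLpNorm (fun z : M => f (x * z)) p ω ≤ ENNReal.ofReal (h x)) ∧
      eLpNorm h p νQ ≤ eLpNorm f p ν := by
  have hr : 0 < p.toReal := ENNReal.toReal_pos hp0 hp
  set F : X → ℝ := fun x => f x ^ p.toReal
  have hF : Continuous F := hf.rpow_const fun _ => Or.inr hr.le
  have hFs : HasCompactSupport F := hfs.rpow_const hr.ne'
  have hF0 : 0 ≤ F := fun x => Real.rpow_nonneg (hf0 x) _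
  have hΦ0 : 0 ≤ fiberIntegral ω F := fun w => integral_nonneg fun z => hF0 _
  refine ⟨fun w => fiberIntegral ω F w ^ p.toReal⁻¹,
    (continuous_fiberIntegral ω hM hF hFs).rpow_const fun _ => Or.inr (inv_nonneg.2 hr.le),
    (hasCompactSupport_fiberIntegral ω hM hFs).rpow_const (inv_ne_zero hr.ne'),
    fun w => Real.rpow_nonneg (hΦ0 w) _, fun x => le_of_eq ?_, le_of_eq ?_⟩
  · have hslice : Integrable (fun z : M => F (x * z)) ω :=
      (hF.comp (continuous_const.mul continuous_subtype_val)).integrable_of_hasCompactSupport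
        (hFs.comp_mul_left_subgroup hM x)
    dsimp only
    rw [eLpNorm_eq_lintegral_ofReal_rpow (f := fun z : M => f (x * z)) (fun z => hf0 _) hp0 hp,
      ← ofReal_integral_eq_lintegral_ofReal hslice (.of_forall fun z => hF0 _), fiberIntegral_mk,
      one_div, ENNReal.ofReal_rpow_of_nonneg (integral_nonneg fun z : M => hF0 (x * z))
        (by positivity)]
  · rw [eLpNorm_eq_lintegral_ofReal_rpow (fun w => Real.rpow_nonneg (hΦ0 w) _) hp0 hp,
      eLpNorm_eq_lintegral_ofReal_rpow hf0 hp0 hp]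
    simp_rw [Real.rpow_inv_rpow (hΦ0 _) hr.ne']
    rw [← ofReal_integral_eq_lintegral_ofReal ((continuous_fiberIntegral ω hM hF hFs)
        |>.integrable_of_hasCompactSupport (hasCompactSupport_fiberIntegral ω hM hFs))
        (.of_forall hΦ0),
      ← ofReal_integral_eq_lintegral_ofReal (hF.integrable_of_hasCompactSupport hFs)
        (.of_forall hF0), hW F hF hFs]
    rfl

theorem exists_quotient_majorant (hM : IsClosed (M : Set X)) (ν : Measure X)
    [ν.IsOpenPosMeasure] [IsFiniteMeasureOnCompacts ν] (ω : Measure M) [ω.IsMulLeftInvariant]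
    [IsFiniteMeasureOnCompacts ω] (νQ : Measure (X ⧸ M)) [IsFiniteMeasureOnCompacts νQ]
    (hW : WeilFormula M ν ω νQ)
    {p : ℝ≥0∞} (hp0 : p ≠ 0) {f : X → ℝ} (hf : Continuous f) (hfs : HasCompactSupport f)
    (hf0 : 0 ≤ f) :
    ∃ h : X ⧸ M → ℝ, Continuous h ∧ HasCompactSupport h ∧ 0 ≤ h ∧
      (∀ x : X, eLpNorm (fun z : M => f (x * z)) p ω ≤ ENNReal.ofReal (h x)) ∧
      eLpNorm h p νQ ≤ eLpNorm f p ν := by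
  rcases eq_or_ne p ∞ with rfl | hp
  · exact exists_quotient_majorant_top hM ν ω νQ hf hfs hf0
  · exact exists_quotient_majorant_of_ne_top hM ν ω νQ hW hp0 hp hf hfs hf0

end Majorant

theorem WeilFormula.lintegral_ofReal_le {G : Type*} [Group G] [TopologicalSpace G]
    [IsTopologicalGroup G] [LocallyCompactSpace G] [T2Space G] [MeasurableSpace G]
    [BorelSpace G] {N : Subgroup G} {μ : Measure G} [μ.IsHaarMeasure] {νN : Measure N}
    {μQ : Measure (G ⧸ N)} (hW : WeilFormula N μ νN μQ) {F : G → ℝ} (hF : Continuous F)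
    (hF0 : 0 ≤ F) :
    ∫⁻ x, ENNReal.ofReal (F x) ∂μ ≤ ∫⁻ q, ∫⁻ y : N, ENNReal.ofReal (F (q.out * y)) ∂νN ∂μQ := by
  refine lintegral_ofReal_le_of_forall_hasCompactSupport_of_isHaarMeasure μ hF hF0
    fun g hg hgs hg0 hgF => ?_
  calc ∫⁻ x, ENNReal.ofReal (g x) ∂μ = ENNReal.ofReal (∫ x, g x ∂μ) :=
        (ofReal_integral_eq_lintegral_ofReal (hg.integrable_of_hasCompactSupport hgs)
          (.of_forall hg0)).symm
    _ = ENNReal.ofReal (∫ q, ∫ y : N, g (q.out * y) ∂νN ∂μQ) := by rw [hW g hg hgs]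
    _ ≤ ∫⁻ q, ENNReal.ofReal (∫ y : N, g (q.out * y) ∂νN) ∂μQ :=
        ofReal_integral_le_lintegral_ofReal fun q => integral_nonneg fun y => hg0 _
    _ ≤ ∫⁻ q, ∫⁻ y : N, ENNReal.ofReal (g (q.out * y)) ∂νN ∂μQ :=
        lintegral_mono fun q => ofReal_integral_le_lintegral_ofReal fun y => hg0 _
    _ ≤ ∫⁻ q, ∫⁻ y : N, ENNReal.ofReal (F (q.out * y)) ∂νN ∂μQ :=
        lintegral_mono fun q => lintegral_mono fun y => ENNReal.ofReal_le_ofReal (hgF _)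

theorem WeilFormula.lintegral_prod_ofReal_le {G : Type*} [Group G] [TopologicalSpace G]
    [IsTopologicalGroup G] [LocallyCompactSpace G] [T2Space G] [MeasurableSpace G]
    [BorelSpace G] {N : Subgroup G} {μ : Measure G} [μ.IsHaarMeasure] {νN : Measure N}
    {μQ : Measure (G ⧸ N)} (hW : WeilFormula N μ νN μQ) {ι : Type*} [Fintype ι]
    {F : ι → G → ℝ} (hF : ∀ i, Continuous (F i)) (hF0 : ∀ i x, 0 ≤ F i x) :
    ∫⁻ x, ∏ i, ENNReal.ofReal (F i x) ∂μ ≤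
      ∫⁻ q, ∫⁻ y : N, ∏ i, ENNReal.ofReal (F i (q.out * y)) ∂νN ∂μQ := by
  simp_rw [← ENNReal.ofReal_prod_of_nonneg fun i _ => hF0 i _]
  exact hW.lintegral_ofReal_le (continuous_finsetProd _ fun i _ => hF i)
    fun x => Finset.prod_nonneg fun i _ => hF0 i x

section BrascampLieb

variable {J : Type*} [Fintype J]

theorem lintegral_prod_le_BLConst_mul {G : Type*} [TopologicalSpace G] [MeasurableSpace G]
    {Gj : J → Type*} [∀ j, TopologicalSpace (Gj j)] [∀ j, MeasurableSpace (Gj j)]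
    [∀ j, OpensMeasurableSpace (Gj j)] (μ : Measure G) (ν : ∀ j, Measure (Gj j))
    [∀ j, (ν j).IsOpenPosMeasure] [∀ j, IsFiniteMeasureOnCompacts (ν j)] (σ : ∀ j, G → Gj j)
    {p : J → ℝ≥0∞} (hp : ∀ j, p j ≠ 0) {f : ∀ j, Gj j → ℝ} (hf : ∀ j, Continuous (f j))
    (hfs : ∀ j, HasCompactSupport (f j)) (hf0 : ∀ j y, 0 ≤ f j y) :
    ∫⁻ x, ∏ j, ENNReal.ofReal (f j (σ j x)) ∂μ ≤
      BLConst μ ν σ p * ∏ j, eLpNorm (f j) (p j) (ν j) := by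
  have hb : ∏ j, eLpNorm (f j) (p j) (ν j) ≠ ∞ := ENNReal.prod_ne_top fun j _ =>
    ((hf j).memLp_of_hasCompactSupport (hfs j)).eLpNorm_ne_top
  rcases eq_or_ne (∏ j, eLpNorm (f j) (p j) (ν j)) 0 with hb0 | hb0
  · obtain ⟨j, -, hj⟩ := Finset.prod_eq_zero_iff.1 hb0
    have hfj : f j = 0 := (Continuous.ae_eq_iff_eq (ν j) (hf j) continuous_const).1
      ((eLpNorm_eq_zero_iff (hf j).aestronglyMeasurable (hp j)).1 hj)
    have hzero : ∀ x, ∏ j, ENNReal.ofReal (f j (σ j x)) = 0 := fun x =>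
      Finset.prod_eq_zero (Finset.mem_univ j) (by simp [hfj])
    simp [hzero]
  · rw [← ENNReal.div_le_iff hb0 hb]
    exact le_sInf fun C hC => (ENNReal.div_le_iff hb0 hb).2 (hC f hf hfs hf0)

theorem lintegral_slice_le_BLConst_subgroupMap_mul {G : Type*} [Group G] [TopologicalSpace G]
    [MeasurableSpace G] {Gj : J → Type*} [∀ j, Group (Gj j)] [∀ j, TopologicalSpace (Gj j)]
    [∀ j, IsTopologicalGroup (Gj j)] [∀ j, MeasurableSpace (Gj j)] [∀ j, BorelSpace (Gj j)]
    (σ : ∀ j, G →* Gj j) {N : Subgroup G} (hN : ∀ j, IsClosed (N.map (σ j) : Set (Gj j)))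
    (νN : Measure N) (νNj : ∀ j, Measure (N.map (σ j))) [∀ j, (νNj j).IsOpenPosMeasure]
    [∀ j, IsFiniteMeasureOnCompacts (νNj j)] {p : J → ℝ≥0∞} (hp : ∀ j, p j ≠ 0)
    {f : ∀ j, Gj j → ℝ} (hf : ∀ j, Continuous (f j)) (hfs : ∀ j, HasCompactSupport (f j))
    (hf0 : ∀ j y, 0 ≤ f j y) (x : G) :
    ∫⁻ y : N, ∏ j, ENNReal.ofReal (f j (σ j (x * y))) ∂νN ≤
      BLConst νN νNj (fun j => (σ j).subgroupMap N) p *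
        ∏ j, eLpNorm (fun z : N.map (σ j) => f j (σ j x * z)) (p j) (νNj j) := by
  simp only [map_mul]
  exact lintegral_prod_le_BLConst_mul νN νNj _ hp
    (fun j => (hf j).comp (continuous_const.mul continuous_subtype_val))
    (fun j => (hfs j).comp_mul_left_subgroup (hN j) _) fun j z => hf0 j _

end BrascampLieb

theorem BLConst_le_mul_of_quotient_general
    {J : Type*} [Fintype J]
    {G : Type*} [Group G] [TopologicalSpace G] [IsTopologicalGroup G] [LocallyCompactSpace G]
    [T2Space G] [MeasurableSpace G] [BorelSpace G]
    (μ : Measure G) [μ.IsHaarMeasure]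
    {Gj : J → Type*} [∀ j, Group (Gj j)] [∀ j, TopologicalSpace (Gj j)]
    [∀ j, IsTopologicalGroup (Gj j)] [∀ j, LocallyCompactSpace (Gj j)]
    [∀ j, MeasurableSpace (Gj j)] [∀ j, BorelSpace (Gj j)]
    (ν : ∀ j, Measure (Gj j)) [∀ j, (ν j).IsHaarMeasure]
    (σ : ∀ j, G →* Gj j) (hσ : ∀ j, Continuous (σ j))
    (p : J → ℝ≥0∞) (hp : ∀ j, 1 ≤ p j)
    (N : Subgroup G) [N.Normal]
    [∀ j, (N.map (σ j)).Normal] (hNjclosed : ∀ j, IsClosed ((N.map (σ j)) : Set (Gj j)))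
    (νN : Measure N)
    (μQ : Measure (G ⧸ N))
    (hWeil : WeilFormula N μ νN μQ)
    (νNj : ∀ j, Measure (N.map (σ j))) [∀ j, (νNj j).IsHaarMeasure]
    (νQj : ∀ j, Measure (Gj j ⧸ N.map (σ j))) [∀ j, (νQj j).IsHaarMeasure]
    (hWeilj : ∀ j, WeilFormula (N.map (σ j)) (ν j) (νNj j) (νQj j)) :
    BLConst μ ν (fun j => ⇑(σ j)) p ≤
      BLConst νN νNj (fun j => ⇑((σ j).subgroupMap N)) p *
        BLConst μQ νQj
          (fun j => ⇑(QuotientGroup.map N (N.map (σ j)) (σ j) (Subgroup.le_comap_map (f := σ j) N))) p := by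
  have hp0 : ∀ j, p j ≠ 0 := fun j => (zero_lt_one.trans_le (hp j)).ne'
  set BLN := BLConst νN νNj (fun j => ⇑((σ j).subgroupMap N)) p
  set σQ : ∀ j, G ⧸ N → Gj j ⧸ N.map (σ j) :=
    fun j => ⇑(QuotientGroup.map N (N.map (σ j)) (σ j) (Subgroup.le_comap_map (f := σ j) N))
  have hσQ : ∀ j (q : G ⧸ N), σQ j q = (σ j q.out : Gj j ⧸ N.map (σ j)) := fun j q => by
    conv_lhs => rw [← QuotientGroup.out_eq' q]
    rfl
  refine sInf_le fun f hf hfs hf0 => ?_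
  choose h hh hhs hh0 hslice hnorm using fun j => exists_quotient_majorant (hNjclosed j) (ν j)
    (νNj j) (νQj j) (hWeilj j) (hp0 j) (hf j) (hfs j) (hf0 j)
  have hinner : ∀ q : G ⧸ N, ∫⁻ y : N, ∏ j, ENNReal.ofReal (f j (σ j (q.out * y))) ∂νN ≤
      BLN * ∏ j, ENNReal.ofReal (h j (σQ j q)) := fun q =>
    (lintegral_slice_le_BLConst_subgroupMap_mul σ hNjclosed νN νNj hp0 hf hfs hf0 q.out).trans
      (by gcongr with j; rw [hσQ]; exact hslice j _)
  have hmeas : Measurable fun q => ∏ j, ENNReal.ofReal (h j (σQ j q)) :=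
    Finset.measurable_prod _ fun j _ => ENNReal.measurable_ofReal.comp
      ((hh j).comp (QuotientGroup.continuous_map (hσ j) _)).measurable
  calc ∫⁻ x, ∏ j, ENNReal.ofReal (f j (σ j x)) ∂μ
      ≤ ∫⁻ q, ∫⁻ y : N, ∏ j, ENNReal.ofReal (f j (σ j (q.out * y))) ∂νN ∂μQ :=
        hWeil.lintegral_prod_ofReal_le (fun j => (hf j).comp (hσ j)) fun j x => hf0 j _
    _ ≤ ∫⁻ q, BLN * ∏ j, ENNReal.ofReal (h j (σQ j q)) ∂μQ := lintegral_mono hinner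
    _ = BLN * ∫⁻ q, ∏ j, ENNReal.ofReal (h j (σQ j q)) ∂μQ := lintegral_const_mul _ hmeas
    _ ≤ BLN * (BLConst μQ νQj σQ p * ∏ j, eLpNorm (h j) (p j) (νQj j)) := by
        gcongr
        exact lintegral_prod_le_BLConst_mul μQ νQj σQ hp0 hh hhs fun j => hh0 j
    _ ≤ BLN * (BLConst μQ νQj σQ p * ∏ j, eLpNorm (f j) (p j) (ν j)) := by
        gcongr with j
        exact hnorm j
    _ = _ := (mul_assoc _ _ _).symm

/-- **Splitting the Brascamp–Lieb constant along a closed normal subgroup.**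
Let `(G, σ, p)` be a Brascamp–Lieb datum of locally compact Hausdorff groups, `N` a closed
normal subgroup of `G` with each `σ j '' N` a closed normal subgroup of `Gj j`. If all the
Haar measures involved are normalised so that the Weil quotient integral formula holds for
`(G, N, G ⧸ N)` and for each `(Gj j, σ j '' N, Gj j ⧸ σ j '' N)`, then
`BL(G, σ, p) ≤ BL(N, σ|_N, p) * BL(G ⧸ N, σ̇, p)`. -/
theorem BLConst_le_mul_of_quotient
    {J : Type*} [Fintype J]
    {G : Type*} [Group G] [TopologicalSpace G] [IsTopologicalGroup G] [LocallyCompactSpace G]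
    [T2Space G] [MeasurableSpace G] [BorelSpace G]
    (μ : Measure G) [μ.IsHaarMeasure]
    {Gj : J → Type*} [∀ j, Group (Gj j)] [∀ j, TopologicalSpace (Gj j)]
    [∀ j, IsTopologicalGroup (Gj j)] [∀ j, LocallyCompactSpace (Gj j)] [∀ j, T2Space (Gj j)]
    [∀ j, MeasurableSpace (Gj j)] [∀ j, BorelSpace (Gj j)]
    (ν : ∀ j, Measure (Gj j)) [∀ j, (ν j).IsHaarMeasure]
    (σ : ∀ j, G →* Gj j) (hσ : ∀ j, Continuous (σ j))
    (p : J → ℝ≥0∞) (hp : ∀ j, 1 ≤ p j)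
    (N : Subgroup G) [N.Normal] (hNclosed : IsClosed (N : Set G))
    [∀ j, (N.map (σ j)).Normal] (hNjclosed : ∀ j, IsClosed ((N.map (σ j)) : Set (Gj j)))
    (νN : Measure N) [νN.IsHaarMeasure]
    (μQ : Measure (G ⧸ N)) [μQ.IsHaarMeasure]
    (hWeil : WeilFormula N μ νN μQ)
    (νNj : ∀ j, Measure (N.map (σ j))) [∀ j, (νNj j).IsHaarMeasure]
    (νQj : ∀ j, Measure (Gj j ⧸ N.map (σ j))) [∀ j, (νQj j).IsHaarMeasure]
    (hWeilj : ∀ j, WeilFormula (N.map (σ j)) (ν j) (νNj j) (νQj j)) :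
    BLConst μ ν (fun j => ⇑(σ j)) p ≤
      BLConst νN νNj (fun j => ⇑((σ j).subgroupMap N)) p *
        BLConst μQ νQj
          (fun j => ⇑(QuotientGroup.map N (N.map (σ j)) (σ j) (Subgroup.le_comap_map (f := σ j) N))) p :=
  BLConst_le_mul_of_quotient_general μ ν σ hσ p hp N hNjclosed νN μQ hWeil νNj νQj hWeilj

end
end

section
/- Let (G, σ, p) be a Brascamp–Lieb datum, let G₀ be an open subgroup of G, and for each j let H_j be an open subgroup of G_j such that σ_j(G₀) ⊆ H_j. Equip G₀ with the restriction to G₀ of the Haar measure of G, and each H_j with the restriction to H_j of the Haar measure of G_j, and let σ°_j : G₀ → H_j be the restriction of σ_j. Then BL(G₀, σ°, p) ≤ BL(G, σ, p). Moreover, if G₀ = G, then BL(G, σ°, p) = BL(G, σ, p); that is, replacing each codomain G_j by an open subgroup H_j containing σ_j(G) does not change the Brascamp–Lieb constant. -/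
/-!
Test functions can be moved between a group and an open subset without changing their norms:
extension by zero from an open set `V ⊆ Gj` is again continuous and compactly supported (in a
Hausdorff space), and restriction to a closed set keeps compact supports; an open subgroup is
also closed. The integral over the open subgroup `G₀` of the pulled-back measure is the integral
over `G₀ ⊆ G`, which is at most (and for `G₀ = G` equal to) the integral over `G`. Comparing test
functions in both directions gives the two inequalities.
-/
open MeasureTheory ENNReal

noncomputable section

section Subtype

variable {α E : Type*} [MeasurableSpace α] [NormedAddCommGroup E] {s : Set α}

theorem eLpNorm_comp_subtype_val (hs : MeasurableSet s) (f : α → E) (p : ℝ≥0∞)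
    (μ : Measure α) :
    eLpNorm (f ∘ (Subtype.val : s → α)) p (μ.comap Subtype.val) = eLpNorm f p (μ.restrict s) := by
  rw [← (MeasurableEmbedding.subtype_coe hs).eLpNorm_map_measure, map_comap_subtype_coe hs]

theorem eLpNorm_comp_subtype_val_le (hs : MeasurableSet s) (f : α → E) (p : ℝ≥0∞)
    (μ : Measure α) :
    eLpNorm (f ∘ (Subtype.val : s → α)) p (μ.comap Subtype.val) ≤ eLpNorm f p μ :=
  (eLpNorm_comp_subtype_val hs f p μ).trans_le (eLpNorm_mono_measure f Measure.restrict_le_self)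

theorem eLpNorm_extend_subtype_val_zero (hs : MeasurableSet s) (f : s → E) (p : ℝ≥0∞)
    (μ : Measure α) :
    eLpNorm (Subtype.val.extend f 0) p μ = eLpNorm f p (μ.comap Subtype.val) := by
  have hsupp : Function.support (Subtype.val.extend f 0) ⊆ s :=
    Function.support_extend_zero_subset.trans (Subtype.coe_image_subset _ _)
  calc eLpNorm (Subtype.val.extend f 0) p μ
      = eLpNorm (Subtype.val.extend f 0) p (μ.restrict s) := by
        rw [← eLpNorm_indicator_eq_eLpNorm_restrict hs, Set.indicator_eq_self.mpr hsupp]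
    _ = eLpNorm (Subtype.val.extend f 0 ∘ Subtype.val) p (μ.comap Subtype.val) :=
        (eLpNorm_comp_subtype_val hs _ p μ).symm
    _ = eLpNorm f p (μ.comap Subtype.val) := by
        rw [Function.extend_comp Subtype.val_injective]

end Subtype

section Transfer

variable {J : Type*} [Fintype J]
  {G G' : Type*} [TopologicalSpace G] [MeasurableSpace G]
  [TopologicalSpace G'] [MeasurableSpace G']
  {Gj Gj' : J → Type*} [∀ j, TopologicalSpace (Gj j)] [∀ j, MeasurableSpace (Gj j)]
  [∀ j, TopologicalSpace (Gj' j)] [∀ j, MeasurableSpace (Gj' j)]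

theorem BLConst_le_of_transfer
    (μ : Measure G) (ν : ∀ j, Measure (Gj j)) (σ : ∀ j, G → Gj j)
    (μ' : Measure G') (ν' : ∀ j, Measure (Gj' j)) (σ' : ∀ j, G' → Gj' j) (p : J → ℝ≥0∞)
    (T : ∀ j, (Gj' j → ℝ) → Gj j → ℝ)
    (hT : ∀ j φ, Continuous φ → HasCompactSupport φ → (∀ y, 0 ≤ φ y) →
      Continuous (T j φ) ∧ HasCompactSupport (T j φ) ∧ (∀ y, 0 ≤ T j φ y) ∧
        eLpNorm (T j φ) (p j) (ν j) ≤ eLpNorm φ (p j) (ν' j))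
    (hint : ∀ f : ∀ j, Gj' j → ℝ, ∫⁻ x, ∏ j, ENNReal.ofReal (f j (σ' j x)) ∂μ' ≤
      ∫⁻ x, ∏ j, ENNReal.ofReal (T j (f j) (σ j x)) ∂μ) :
    BLConst μ' ν' σ' p ≤ BLConst μ ν σ p := by
  refine sInf_le_sInf fun C hC f hcont hsupp hnn => ?_
  choose hTcont hTsupp hTnn hTnorm using fun j => hT j (f j) (hcont j) (hsupp j) (hnn j)
  calc ∫⁻ x, ∏ j, ENNReal.ofReal (f j (σ' j x)) ∂μ'
      ≤ ∫⁻ x, ∏ j, ENNReal.ofReal (T j (f j) (σ j x)) ∂μ := hint f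
    _ ≤ C * ∏ j, eLpNorm (T j (f j)) (p j) (ν j) := hC _ hTcont hTsupp hTnn
    _ ≤ C * ∏ j, eLpNorm (f j) (p j) (ν' j) := by
      gcongr with j
      exact hTnorm j

end Transfer

section Restriction

variable {J : Type*} [Fintype J]
  {G : Type*} [TopologicalSpace G] [MeasurableSpace G]
  {Gj : J → Type*} [∀ j, TopologicalSpace (Gj j)] [∀ j, MeasurableSpace (Gj j)]
  [∀ j, OpensMeasurableSpace (Gj j)]

theorem BLConst_subtype_le [∀ j, T2Space (Gj j)]
    (μ : Measure G) (ν : ∀ j, Measure (Gj j)) (σ : ∀ j, G → Gj j) (p : J → ℝ≥0∞)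
    {U : Set G} (hU : MeasurableSet U) {V : ∀ j, Set (Gj j)} (hV : ∀ j, IsOpen (V j))
    (hmaps : ∀ j, Set.MapsTo (σ j) U (V j)) :
    BLConst (μ.comap Subtype.val) (fun j => (ν j).comap Subtype.val)
        (fun j (x : U) => (⟨σ j x, hmaps j x.2⟩ : V j)) p ≤
      BLConst μ ν σ p := by
  refine BLConst_le_of_transfer _ _ _ _ _ _ p (fun j φ => Subtype.val.extend φ 0)
    (fun j φ hcont hsupp hnn => ⟨hsupp.continuous_extend_zero (hV j) hcont,
      hsupp.extend_zero continuous_subtype_val, Function.extend_nonneg (g := φ) hnn le_rfl,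
      (eLpNorm_extend_subtype_val_zero (hV j).measurableSet φ _ _).le⟩) fun f => ?_
  calc ∫⁻ x : U, ∏ j, ENNReal.ofReal (f j ⟨σ j x, hmaps j x.2⟩) ∂μ.comap Subtype.val
      = ∫⁻ x : U, ∏ j, ENNReal.ofReal (Subtype.val.extend (f j) 0 (σ j x))
          ∂μ.comap Subtype.val := by
        simp only [fun j (x : U) => Subtype.val_injective.extend_apply (f j) 0
          (⟨σ j x, hmaps j x.2⟩ : V j)]
    _ = ∫⁻ x in U, ∏ j, ENNReal.ofReal (Subtype.val.extend (f j) 0 (σ j x)) ∂μ :=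
        lintegral_subtype_comap hU
          (fun y => ∏ j, ENNReal.ofReal (Subtype.val.extend (f j) 0 (σ j y)))
    _ ≤ _ := setLIntegral_le_lintegral U _

theorem BLConst_le_subtype
    (μ : Measure G) (ν : ∀ j, Measure (Gj j)) (σ : ∀ j, G → Gj j) (p : J → ℝ≥0∞)
    {U : Set G} (hU : MeasurableSet U) (hUae : ∀ᵐ x ∂μ, x ∈ U)
    {V : ∀ j, Set (Gj j)} (hV : ∀ j, IsClosed (V j))
    (hmaps : ∀ j, Set.MapsTo (σ j) U (V j)) :
    BLConst μ ν σ p ≤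
      BLConst (μ.comap Subtype.val) (fun j => (ν j).comap Subtype.val)
        (fun j (x : U) => (⟨σ j x, hmaps j x.2⟩ : V j)) p := by
  refine BLConst_le_of_transfer _ _ _ _ _ _ p (fun j φ => φ ∘ Subtype.val)
    (fun j φ hcont hsupp hnn => ⟨hcont.comp continuous_subtype_val,
      hsupp.comp_isClosedEmbedding (hV j).isClosedEmbedding_subtypeVal, fun y => hnn y,
      eLpNorm_comp_subtype_val_le (hV j).measurableSet φ _ _⟩) fun f => ?_
  refine le_of_eq ?_
  calc ∫⁻ x, ∏ j, ENNReal.ofReal (f j (σ j x)) ∂μ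
      = ∫⁻ x in U, ∏ j, ENNReal.ofReal (f j (σ j x)) ∂μ := by
        rw [Measure.restrict_eq_self_of_ae_mem hUae]
    _ = _ := (lintegral_subtype_comap hU (fun y => ∏ j, ENNReal.ofReal (f j (σ j y)))).symm

end Restriction

theorem BLConst_open_subgroup_le_general
    {J : Type*} [Fintype J]
    {G : Type*} [Group G] [TopologicalSpace G] [MeasurableSpace G] [BorelSpace G]
    (μ : Measure G)
    {Gj : J → Type*} [∀ j, Group (Gj j)] [∀ j, TopologicalSpace (Gj j)]
    [∀ j, IsTopologicalGroup (Gj j)] [∀ j, T2Space (Gj j)]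
    [∀ j, MeasurableSpace (Gj j)] [∀ j, BorelSpace (Gj j)]
    (ν : ∀ j, Measure (Gj j))
    (σ : ∀ j, G →* Gj j) (p : J → ℝ≥0∞)
    (G₀ : Subgroup G) (hG₀ : IsOpen (G₀ : Set G))
    (H : ∀ j, Subgroup (Gj j)) (hH : ∀ j, IsOpen ((H j : Set (Gj j))))
    (hmaps : ∀ j, Set.MapsTo (σ j) (G₀ : Set G) ((H j : Set (Gj j)))) :
    BLConst (μ.comap Subtype.val) (fun j => (ν j).comap Subtype.val)
        (fun j => fun x : G₀ => (⟨σ j x, hmaps j x.2⟩ : H j)) p ≤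
      BLConst μ ν (fun j => ⇑(σ j)) p ∧
    (G₀ = ⊤ →
      BLConst (μ.comap Subtype.val) (fun j => (ν j).comap Subtype.val)
          (fun j => fun x : G₀ => (⟨σ j x, hmaps j x.2⟩ : H j)) p =
        BLConst μ ν (fun j => ⇑(σ j)) p) := by
  have hle := BLConst_subtype_le μ ν (fun j => σ j) p hG₀.measurableSet hH hmaps
  refine ⟨hle, fun hG => le_antisymm hle ?_⟩
  subst hG
  exact BLConst_le_subtype μ ν (fun j => σ j) p hG₀.measurableSet
    (Filter.Eventually.of_forall Set.mem_univ)
    (fun j => (H j).isClosed_of_isOpen (hH j)) hmaps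

/-- **Restriction to open subgroups does not increase the Brascamp–Lieb constant.**
Let `(G, σ, p)` be a Brascamp–Lieb datum of locally compact Hausdorff groups, `G₀` an open
subgroup of `G` and `H j` open subgroups of `Gj j` with `σ j '' G₀ ⊆ H j`; equip `G₀` and the
`H j` with the restrictions (pullbacks along the inclusions) of the ambient Haar measures.
Then `BL(G₀, σ°, p) ≤ BL(G, σ, p)`, with equality when `G₀ = G`. -/
theorem BLConst_open_subgroup_le
    {J : Type*} [Fintype J]
    {G : Type*} [Group G] [TopologicalSpace G] [IsTopologicalGroup G] [LocallyCompactSpace G]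
    [T2Space G] [MeasurableSpace G] [BorelSpace G]
    (μ : Measure G) [μ.IsHaarMeasure]
    {Gj : J → Type*} [∀ j, Group (Gj j)] [∀ j, TopologicalSpace (Gj j)]
    [∀ j, IsTopologicalGroup (Gj j)] [∀ j, LocallyCompactSpace (Gj j)] [∀ j, T2Space (Gj j)]
    [∀ j, MeasurableSpace (Gj j)] [∀ j, BorelSpace (Gj j)]
    (ν : ∀ j, Measure (Gj j)) [∀ j, (ν j).IsHaarMeasure]
    (σ : ∀ j, G →* Gj j) (hσ : ∀ j, Continuous (σ j))
    (p : J → ℝ≥0∞) (hp : ∀ j, 1 ≤ p j)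
    (G₀ : Subgroup G) (hG₀ : IsOpen (G₀ : Set G))
    (H : ∀ j, Subgroup (Gj j)) (hH : ∀ j, IsOpen ((H j : Set (Gj j))))
    (hmaps : ∀ j, Set.MapsTo (σ j) (G₀ : Set G) ((H j : Set (Gj j)))) :
    BLConst (μ.comap Subtype.val) (fun j => (ν j).comap Subtype.val)
        (fun j => fun x : G₀ => (⟨σ j x, hmaps j x.2⟩ : H j)) p ≤
      BLConst μ ν (fun j => ⇑(σ j)) p ∧
    (G₀ = ⊤ →
      BLConst (μ.comap Subtype.val) (fun j => (ν j).comap Subtype.val)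
          (fun j => fun x : G₀ => (⟨σ j x, hmaps j x.2⟩ : H j)) p =
        BLConst μ ν (fun j => ⇑(σ j)) p) :=
  BLConst_open_subgroup_le_general μ ν σ p G₀ hG₀ H hH hmaps
end
end

section
/- Let (G, σ, p) be a Brascamp–Lieb datum and let N be a compact normal subgroup of G such that each σ_j(N) is a compact normal subgroup of G_j. Let σ̇_j : G/N → G_j/σ_j(N) be the induced continuous homomorphisms. Then (σ̇_1, …, σ̇_J) : G/N → ∏_j G_j/σ_j(N) is proper whenever (σ_1, …, σ_J) : G → ∏_j G_j is proper. Moreover, if the Haar measures on N and on each σ_j(N) are probability measures, and the Haar measures on G/N and on each G_j/σ_j(N) are chosen so that the Weil quotient integral formula holds for (G, N, G/N) and for (G_j, σ_j(N), G_j/σ_j(N)), then BL(G/N, σ̇, p) ≤ BL(G, σ, p), with equality if N ⊆ ker σ_j for every j. -/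
/-!
Write `π` for the quotient maps. As `N` is compact, `π : G → G ⧸ N` is proper. Because the Haar
measure of `N` has mass one, the Weil formula says that `μQ` and the image of `μ` under `π` have
the same integrals of compactly supported continuous functions; by uniqueness of Haar measure
they agree on open sets, hence (layer cake) on lintegrals of nonnegative continuous functions
and on `L^p` norms of continuous functions. So every input `f` of the quotient datum yields the
input `f ∘ π` of the original one with the same norms and the same left-hand side, which gives
`BL(G ⧸ N) ≤ BL(G)`. If `N ≤ ker σ j` for all `j`, the subgroups `σ j '' N` are trivial, every
input of the original datum descends, and the inequality reverses. Properness descends since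
`σ̇ ⁻¹' K` is the image under `π` of `σ ⁻¹' ((∏ π) ⁻¹' K)`, with `∏ π` proper.
-/

open MeasureTheory ENNReal

noncomputable section

open Set Function Filter

section AgreeOnOpens

variable {X : Type*} [TopologicalSpace X] [MeasurableSpace X] {m₁ m₂ : Measure X}

theorem essSup_eq_of_forall_isOpen (h : ∀ U, IsOpen U → m₁ U = m₂ U) {f : X → ℝ≥0∞}
    (hf : LowerSemicontinuous f) : essSup f m₁ = essSup f m₂ := by
  simp only [essSup_eq_sInf]
  congr! 3 with a
  rw [show {x | a < f x} = f ⁻¹' Ioi a from rfl, h _ (hf.isOpen_preimage a)]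

variable [OpensMeasurableSpace X]

theorem lintegral_ofReal_eq_of_forall_isOpen_s8 (h : ∀ U, IsOpen U → m₁ U = m₂ U) {f : X → ℝ}
    (hf : Continuous f) (hf0 : 0 ≤ f) :
    ∫⁻ x, ENNReal.ofReal (f x) ∂m₁ = ∫⁻ x, ENNReal.ofReal (f x) ∂m₂ := by
  rw [lintegral_eq_lintegral_meas_lt m₁ (.of_forall hf0) hf.aemeasurable,
    lintegral_eq_lintegral_meas_lt m₂ (.of_forall hf0) hf.aemeasurable]
  exact lintegral_congr fun t => h _ (isOpen_lt continuous_const hf)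

theorem eLpNorm_eq_of_forall_isOpen (h : ∀ U, IsOpen U → m₁ U = m₂ U) {E : Type*}
    [NormedAddCommGroup E] {f : X → E} (hf : Continuous f) (p : ℝ≥0∞) :
    eLpNorm f p m₁ = eLpNorm f p m₂ := by
  rcases eq_or_ne p 0 with rfl | hp0
  · simp
  rcases eq_or_ne p ∞ with rfl | hptop
  · simp only [eLpNorm_exponent_top, eLpNormEssSup]
    exact essSup_eq_of_forall_isOpen h hf.enorm.lowerSemicontinuous
  have hrpow (x : X) : ‖f x‖ₑ ^ p.toReal = ENNReal.ofReal (‖f x‖ ^ p.toReal) := by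
    rw [← ofReal_norm, ENNReal.ofReal_rpow_of_nonneg (norm_nonneg _) toReal_nonneg]
  simp only [eLpNorm_eq_lintegral_rpow_enorm_toReal hp0 hptop, hrpow]
  rw [lintegral_ofReal_eq_of_forall_isOpen_s8 h (hf.norm.rpow_const fun _ => .inr toReal_nonneg)
    fun _ => by positivity]

end AgreeOnOpens

namespace MeasureTheory.Measure

section HaarUniqueness

variable {G : Type*} [Group G] [TopologicalSpace G] [IsTopologicalGroup G] [LocallyCompactSpace G]
  [MeasurableSpace G] [BorelSpace G]

theorem measure_isOpen_eq_of_forall_integral_eq (μ μ' : Measure G) [μ.IsHaarMeasure]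
    [μ'.IsHaarMeasure]
    (h : ∀ g : G → ℝ, Continuous g → HasCompactSupport g → ∫ x, g x ∂μ = ∫ x, g x ∂μ')
    {U : Set G} (hU : IsOpen U) : μ U = μ' U := by
  obtain ⟨g, hg_supp, hg_nonneg, hg_one⟩ :
      ∃ g : C(G, ℝ), HasCompactSupport g ∧ 0 ≤ (g : G → ℝ) ∧ g 1 ≠ 0 :=
    exists_continuous_nonneg_pos 1
  have hg_int : ∫ x, g x ∂μ' ≠ 0 :=
    (g.continuous.integral_pos_of_hasCompactSupport_nonneg_nonzero hg_supp hg_nonneg hg_one).ne'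
  have hfactor : haarScalarFactor μ μ' = 1 := by
    have := haarScalarFactor_eq_integral_div μ μ' g.continuous hg_supp hg_int
    rw [h g g.continuous hg_supp, div_self hg_int] at this
    exact_mod_cast this
  rw [measure_isHaarMeasure_eq_smul_of_isOpen μ μ' hU, hfactor, one_smul]

end HaarUniqueness

theorem isHaarMeasure_trim_borel {G : Type*} [Group G] [TopologicalSpace G]
    [ContinuousMul G] [WeaklyLocallyCompactSpace G] [MeasurableSpace G]
    [hG : OpensMeasurableSpace G] [MeasurableMul G] (μ : Measure G) [μ.IsHaarMeasure] :
    @IsHaarMeasure G _ _ (borel G) (μ.trim hG.borel_le) := by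
  have hle := hG.borel_le
  have hinv (g : G) (s : Set G) : μ ((g * ·) ⁻¹' s) = μ s := measure_preimage_mul μ g s
  let _ : MeasurableSpace G := borel G
  have _ : BorelSpace G := ⟨rfl⟩
  exact
  { lt_top_of_isCompact := fun K hK => by
      obtain ⟨L, hL, hKL⟩ := exists_compact_superset hK
      calc μ.trim hle K ≤ μ.trim hle (interior L) := measure_mono hKL
        _ = μ (interior L) := trim_measurableSet_eq hle isOpen_interior.measurableSet
        _ ≤ μ L := measure_mono interior_subset
        _ < ∞ := hL.measure_lt_top
    map_mul_left_eq_self := fun g => by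
      ext s hs
      have hmul : Measurable (g * ·) := (continuous_const_mul g).measurable
      rw [map_apply hmul hs, trim_measurableSet_eq hle (hmul hs), trim_measurableSet_eq hle hs,
        hinv]
    open_pos := fun U hU hne => by
      rw [trim_measurableSet_eq hle hU.measurableSet]
      exact hU.measure_ne_zero μ hne }

end MeasureTheory.Measure

theorem HasCompactSupport.comp_isProperMap {α β γ : Type*} [TopologicalSpace α]
    [TopologicalSpace β] [Zero γ] {f : β → γ} {g : α → β} (hf : HasCompactSupport f)
    (hg : IsProperMap g) : HasCompactSupport (f ∘ g) :=
  (hg.isCompact_preimage hf).of_isClosed_subset (isClosed_tsupport _)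
    (tsupport_comp_subset_preimage f hg.continuous)

namespace QuotientGroup

section Measurable

variable {G : Type*} [Group G] [MeasurableSpace G]

instance opensMeasurableSpace_s8 [TopologicalSpace G] [OpensMeasurableSpace G] (N : Subgroup G) :
    OpensMeasurableSpace (G ⧸ N) where
  borel_le := MeasurableSpace.generateFrom_le fun _ hU =>
    measurableSet_quotient.2 (hU.preimage continuous_mk).measurableSet

instance measurableMul [MeasurableMul G] (N : Subgroup G) [N.Normal] : MeasurableMul (G ⧸ N) where
  measurable_const_mul q := by
    obtain ⟨x, rfl⟩ := mk_surjective q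
    exact measurable_from_quotient.2 (measurable_coe.comp (measurable_const_mul x))
  measurable_mul_const q := by
    obtain ⟨x, rfl⟩ := mk_surjective q
    exact measurable_from_quotient.2 (measurable_coe.comp (measurable_mul_const x))

end Measurable

theorem continuous_map_s8 {G H : Type*} [Group G] [TopologicalSpace G] [Group H] [TopologicalSpace H]
    {N : Subgroup G} {M : Subgroup H} [N.Normal] [M.Normal] {f : G →* H} (hf : Continuous f)
    (h : N ≤ M.comap f) : Continuous (map N M f h) :=
  (isQuotientMap_mk N).continuous_iff.2 (continuous_mk.comp hf)

variable {G : Type*} [Group G] [TopologicalSpace G] [IsTopologicalGroup G] {N : Subgroup G}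

theorem isProperMap_mk_of_isCompact (hN : IsCompact (N : Set G)) :
    IsProperMap ((↑) : G → G ⧸ N) := by
  refine isProperMap_iff_isClosedMap_and_compact_fibers.2
    ⟨continuous_mk, isClosedMap_coe hN, fun q => ?_⟩
  obtain ⟨x, rfl⟩ := mk_surjective q
  rw [← image_singleton, preimage_image_mk_eq_mul]
  exact isCompact_singleton.mul hN

theorem exists_continuous_hasCompactSupport_comp_mk_eq (hN : IsCompact (N : Set G)) {f : G → ℝ}
    (hf : Continuous f) (hfc : HasCompactSupport f) (hfN : ∀ x, ∀ n ∈ N, f (x * n) = f x) :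
    ∃ g : G ⧸ N → ℝ, Continuous g ∧ HasCompactSupport g ∧ g ∘ (↑) = f := by
  have hg : (fun q : G ⧸ N => f q.out) ∘ (↑) = f := by
    funext x
    obtain ⟨n, hn⟩ := mk_out_eq_mul N x
    simp only [comp_apply, hn, hfN x n n.2]
  refine ⟨fun q => f q.out, (isQuotientMap_mk N).continuous_iff.2 (by rwa [hg]), ?_, hg⟩
  refine .intro' (hfc.image continuous_mk) (isClosedMap_coe hN _ (isClosed_tsupport f))
    fun q hq => image_eq_zero_of_notMem_tsupport fun hout => hq ⟨q.out, hout, out_eq' q⟩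

end QuotientGroup

namespace WeilFormula

variable {G : Type*} [Group G] [TopologicalSpace G] [IsTopologicalGroup G] [MeasurableSpace G]
  {N : Subgroup G} [N.Normal] {μ : Measure G} {νN : Measure N} [IsProbabilityMeasure νN]
  {μQ : Measure (G ⧸ N)}

theorem integral_comp_mk (hWeil : WeilFormula N μ νN μQ) (hN : IsCompact (N : Set G))
    {g : G ⧸ N → ℝ} (hg : Continuous g) (hgc : HasCompactSupport g) :
    ∫ x, g x ∂μ = ∫ q, g q ∂μQ := by
  have hmk (q : G ⧸ N) (y : N) : ((q.out * (y : G) : G) : G ⧸ N) = q := by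
    rw [QuotientGroup.mk_mul, (QuotientGroup.eq_one_iff (y : G)).2 y.2, mul_one,
      QuotientGroup.out_eq']
  simpa only [comp_apply, hmk, integral_const, probReal_univ, one_smul] using
    hWeil (g ∘ (↑)) (hg.comp QuotientGroup.continuous_mk)
      (hgc.comp_isProperMap (QuotientGroup.isProperMap_mk_of_isCompact hN))

variable [LocallyCompactSpace G] [BorelSpace G] [μ.IsHaarMeasure] [μQ.IsHaarMeasure]

theorem map_mk_apply_of_isOpen (hWeil : WeilFormula N μ νN μQ) (hN : IsCompact (N : Set G))
    {U : Set (G ⧸ N)} (hU : IsOpen U) : μ.map (↑) U = μQ U := by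
  -- Uniqueness of Haar measure needs the Borel σ-algebra, which may be coarser than the quotient
  -- σ-algebra of `G ⧸ N`; so both measures are compared after trimming to Borel sets.
  have hle := OpensMeasurableSpace.borel_le (α := G ⧸ N)
  have hπ := QuotientGroup.isProperMap_mk_of_isCompact hN
  rw [Measure.map_apply QuotientGroup.measurable_coe hU.measurableSet,
    ← trim_measurableSet_eq hle (MeasurableSpace.measurableSet_generateFrom hU)]
  have _ := Measure.isHaarMeasure_trim_borel μQ
  let _ : MeasurableSpace (G ⧸ N) := borel (G ⧸ N)
  have _ : BorelSpace (G ⧸ N) := ⟨rfl⟩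
  have _ : (μ.map ((↑) : G → G ⧸ N)).IsHaarMeasure :=
    Measure.isHaarMeasure_map μ (QuotientGroup.mk' N) QuotientGroup.continuous_mk
      (QuotientGroup.mk'_surjective N)
      ((hasBasis_cocompact.tendsto_iff hasBasis_cocompact).2
        fun _ hK => ⟨_, hπ.isCompact_preimage hK, fun _ => id⟩)
  rw [← Measure.map_apply QuotientGroup.continuous_mk.measurable hU.measurableSet]
  refine Measure.measure_isOpen_eq_of_forall_integral_eq _ _ (fun g hg hgc => ?_) hU
  rw [integral_map QuotientGroup.continuous_mk.aemeasurable hg.aestronglyMeasurable,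
    ← integral_trim hle hg.stronglyMeasurable]
  exact hWeil.integral_comp_mk hN hg hgc

theorem lintegral_ofReal_comp_mk (hWeil : WeilFormula N μ νN μQ) (hN : IsCompact (N : Set G))
    {h : G ⧸ N → ℝ} (hh : Continuous h) (hh0 : 0 ≤ h) :
    ∫⁻ x, ENNReal.ofReal (h x) ∂μ = ∫⁻ q, ENNReal.ofReal (h q) ∂μQ := by
  rw [← lintegral_map hh.measurable.ennreal_ofReal QuotientGroup.measurable_coe]
  exact lintegral_ofReal_eq_of_forall_isOpen_s8 (fun _ ↦ hWeil.map_mk_apply_of_isOpen hN) hh hh0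

theorem eLpNorm_comp_mk (hWeil : WeilFormula N μ νN μQ) (hN : IsCompact (N : Set G))
    {f : G ⧸ N → ℝ} (hf : Continuous f) (p : ℝ≥0∞) :
    eLpNorm (f ∘ (↑)) p μ = eLpNorm f p μQ := by
  rw [← eLpNorm_map_measure hf.aestronglyMeasurable QuotientGroup.measurable_coe.aemeasurable]
  exact eLpNorm_eq_of_forall_isOpen (fun _ ↦ hWeil.map_mk_apply_of_isOpen hN) hf p

end WeilFormula

theorem BLConst_le_of_forall_exists_input {J : Type*} [Fintype J]
    {G G' : Type*} [TopologicalSpace G] [MeasurableSpace G] [TopologicalSpace G']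
    [MeasurableSpace G'] {Gj Gj' : J → Type*} [∀ j, TopologicalSpace (Gj j)]
    [∀ j, MeasurableSpace (Gj j)] [∀ j, TopologicalSpace (Gj' j)] [∀ j, MeasurableSpace (Gj' j)]
    {μ : Measure G} {ν : ∀ j, Measure (Gj j)} {σ : ∀ j, G → Gj j}
    {μ' : Measure G'} {ν' : ∀ j, Measure (Gj' j)} {σ' : ∀ j, G' → Gj' j} {p : J → ℝ≥0∞}
    (h : ∀ f : ∀ j, Gj' j → ℝ, (∀ j, Continuous (f j)) → (∀ j, HasCompactSupport (f j)) →
      (∀ j y, 0 ≤ f j y) → ∃ g : ∀ j, Gj j → ℝ, (∀ j, Continuous (g j)) ∧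
        (∀ j, HasCompactSupport (g j)) ∧ (∀ j y, 0 ≤ g j y) ∧
        (∀ j, eLpNorm (g j) (p j) (ν j) = eLpNorm (f j) (p j) (ν' j)) ∧
        ∫⁻ x, ∏ j, ENNReal.ofReal (f j (σ' j x)) ∂μ' ≤
          ∫⁻ x, ∏ j, ENNReal.ofReal (g j (σ j x)) ∂μ) :
    BLConst μ' ν' σ' p ≤ BLConst μ ν σ p := by
  refine sInf_le_sInf fun C hC f hf hfc hf0 => ?_
  obtain ⟨g, hg, hgc, hg0, hnorm, hint⟩ := h f hf hfc hf0
  calc ∫⁻ x, ∏ j, ENNReal.ofReal (f j (σ' j x)) ∂μ'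
      ≤ ∫⁻ x, ∏ j, ENNReal.ofReal (g j (σ j x)) ∂μ := hint
    _ ≤ C * ∏ j, eLpNorm (g j) (p j) (ν j) := hC g hg hgc hg0
    _ = C * ∏ j, eLpNorm (f j) (p j) (ν' j) := by simp only [hnorm]

section CompactQuotient

variable {J : Type*} {G : Type*} [Group G] [TopologicalSpace G] {Gj : J → Type*}
  [∀ j, Group (Gj j)] [∀ j, TopologicalSpace (Gj j)] {σ : ∀ j, G →* Gj j}
  {N : Subgroup G} [N.Normal] {M : ∀ j, Subgroup (Gj j)} [∀ j, (M j).Normal]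

theorem isCompact_preimage_pi_quotientMap [∀ j, IsTopologicalGroup (Gj j)]
    (hM : ∀ j, IsCompact (M j : Set (Gj j))) (hNM : ∀ j, N ≤ (M j).comap (σ j))
    (hσ : ∀ K, IsCompact K → IsCompact (MonoidHom.pi σ ⁻¹' K))
    {K : Set (∀ j, Gj j ⧸ M j)} (hK : IsCompact K) :
    IsCompact (MonoidHom.pi (fun j => QuotientGroup.map N (M j) (σ j) (hNM j)) ⁻¹' K) := by
  have hP : IsProperMap fun (z : ∀ j, Gj j) j => (z j : Gj j ⧸ M j) :=
    .pi_map fun j => QuotientGroup.isProperMap_mk_of_isCompact (hM j)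
  rw [← QuotientGroup.mk_surjective.image_preimage
    (MonoidHom.pi (fun j => QuotientGroup.map N (M j) (σ j) (hNM j)) ⁻¹' K)]
  exact (hσ _ (hP.isCompact_preimage hK)).image QuotientGroup.continuous_mk

variable [Fintype J] [IsTopologicalGroup G] [LocallyCompactSpace G] [MeasurableSpace G]
  [BorelSpace G] {μ : Measure G} [μ.IsHaarMeasure] {νN : Measure N} [IsProbabilityMeasure νN]
  {μQ : Measure (G ⧸ N)} [μQ.IsHaarMeasure]

theorem lintegral_prod_comp_quotientMap (hσ : ∀ j, Continuous (σ j))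
    (hN : IsCompact (N : Set G)) (hNM : ∀ j, N ≤ (M j).comap (σ j))
    (hWeil : WeilFormula N μ νN μQ) {F : ∀ j, Gj j ⧸ M j → ℝ} (hF : ∀ j, Continuous (F j))
    (hF0 : ∀ j y, 0 ≤ F j y) :
    ∫⁻ q, ∏ j, ENNReal.ofReal (F j (QuotientGroup.map N (M j) (σ j) (hNM j) q)) ∂μQ =
      ∫⁻ x, ∏ j, ENNReal.ofReal (F j (σ j x)) ∂μ := by
  have hcont : Continuous fun q => ∏ j, F j (QuotientGroup.map N (M j) (σ j) (hNM j) q) :=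
    continuous_finsetProd _ fun j _ => (hF j).comp (QuotientGroup.continuous_map_s8 (hσ j) (hNM j))
  simp only [← ENNReal.ofReal_prod_of_nonneg fun j _ => hF0 j _]
  exact (hWeil.lintegral_ofReal_comp_mk hN hcont
    fun _ => Finset.prod_nonneg fun j _ => hF0 j _).symm

variable [∀ j, IsTopologicalGroup (Gj j)] [∀ j, LocallyCompactSpace (Gj j)]
  [∀ j, MeasurableSpace (Gj j)] [∀ j, BorelSpace (Gj j)] {ν : ∀ j, Measure (Gj j)}
  [∀ j, (ν j).IsHaarMeasure] {νM : ∀ j, Measure (M j)} [∀ j, IsProbabilityMeasure (νM j)]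
  {νQ : ∀ j, Measure (Gj j ⧸ M j)} [∀ j, (νQ j).IsHaarMeasure] {p : J → ℝ≥0∞}

theorem BLConst_quotientMap_le (hσ : ∀ j, Continuous (σ j)) (hN : IsCompact (N : Set G))
    (hM : ∀ j, IsCompact (M j : Set (Gj j))) (hNM : ∀ j, N ≤ (M j).comap (σ j))
    (hWeil : WeilFormula N μ νN μQ) (hWeilj : ∀ j, WeilFormula (M j) (ν j) (νM j) (νQ j)) :
    BLConst μQ νQ (fun j => QuotientGroup.map N (M j) (σ j) (hNM j)) p ≤
      BLConst μ ν (fun j => σ j) p :=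
  BLConst_le_of_forall_exists_input fun f hf hfc hf0 =>
    ⟨fun j => f j ∘ (↑), fun j => (hf j).comp QuotientGroup.continuous_mk,
      fun j => (hfc j).comp_isProperMap (QuotientGroup.isProperMap_mk_of_isCompact (hM j)),
      fun j _ => hf0 j _, fun j => (hWeilj j).eLpNorm_comp_mk (hM j) (hf j) (p j),
      (lintegral_prod_comp_quotientMap hσ hN hNM hWeil hf hf0).le⟩

theorem BLConst_le_quotientMap (hσ : ∀ j, Continuous (σ j)) (hN : IsCompact (N : Set G))
    (hM_bot : ∀ j, M j = ⊥) (hNM : ∀ j, N ≤ (M j).comap (σ j)) (hWeil : WeilFormula N μ νN μQ)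
    (hWeilj : ∀ j, WeilFormula (M j) (ν j) (νM j) (νQ j)) :
    BLConst μ ν (fun j => σ j) p ≤
      BLConst μQ νQ (fun j => QuotientGroup.map N (M j) (σ j) (hNM j)) p := by
  refine BLConst_le_of_forall_exists_input fun f hf hfc hf0 => ?_
  have hM (j : J) : IsCompact (M j : Set (Gj j)) := by
    simp only [hM_bot j, Subgroup.coe_bot, isCompact_singleton]
  have hfM (j : J) (x : Gj j) (n : Gj j) (hn : n ∈ M j) : f j (x * n) = f j x := by
    rw [hM_bot j, Subgroup.mem_bot] at hn
    rw [hn, mul_one]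
  choose g hg hgc hgf using fun j =>
    QuotientGroup.exists_continuous_hasCompactSupport_comp_mk_eq (hM j) (hf j) (hfc j) (hfM j)
  have hg0 (j : J) (q : Gj j ⧸ M j) : 0 ≤ g j q := by
    obtain ⟨x, rfl⟩ := QuotientGroup.mk_surjective q
    have := hf0 j x
    rwa [← hgf j, comp_apply] at this
  refine ⟨g, hg, hgc, hg0, fun j => ?_, ?_⟩
  · rw [← (hWeilj j).eLpNorm_comp_mk (hM j) (hg j), hgf]
  · rw [lintegral_prod_comp_quotientMap hσ hN hNM hWeil hg hg0]
    simp only [← hgf, comp_apply, le_refl]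

end CompactQuotient

theorem BLConst_compact_quotient_general
    {J : Type*} [Fintype J]
    {G : Type*} [Group G] [TopologicalSpace G] [IsTopologicalGroup G] [LocallyCompactSpace G]
    [MeasurableSpace G] [BorelSpace G]
    (μ : Measure G) [μ.IsHaarMeasure]
    {Gj : J → Type*} [∀ j, Group (Gj j)] [∀ j, TopologicalSpace (Gj j)]
    [∀ j, IsTopologicalGroup (Gj j)] [∀ j, LocallyCompactSpace (Gj j)]
    [∀ j, MeasurableSpace (Gj j)] [∀ j, BorelSpace (Gj j)]
    (ν : ∀ j, Measure (Gj j)) [∀ j, (ν j).IsHaarMeasure]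
    (σ : ∀ j, G →* Gj j) (hσ : ∀ j, Continuous (σ j))
    (p : J → ℝ≥0∞)
    (N : Subgroup G) [N.Normal] (hNcompact : IsCompact (N : Set G))
    [∀ j, (N.map (σ j)).Normal] (hNjcompact : ∀ j, IsCompact ((N.map (σ j)) : Set (Gj j)))
    (νN : Measure N) [IsProbabilityMeasure νN]
    (μQ : Measure (G ⧸ N)) [μQ.IsHaarMeasure]
    (hWeil : WeilFormula N μ νN μQ)
    (νNj : ∀ j, Measure (N.map (σ j))) [∀ j, IsProbabilityMeasure (νNj j)]
    (νQj : ∀ j, Measure (Gj j ⧸ N.map (σ j))) [∀ j, (νQj j).IsHaarMeasure]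
    (hWeilj : ∀ j, WeilFormula (N.map (σ j)) (ν j) (νNj j) (νQj j)) :
    ((∀ K : Set (∀ j, Gj j), IsCompact K → IsCompact (Pi.monoidHom σ ⁻¹' K)) →
      (∀ K : Set (∀ j, Gj j ⧸ N.map (σ j)), IsCompact K →
        IsCompact ((Pi.monoidHom fun j =>
          QuotientGroup.map N (N.map (σ j)) (σ j) (Subgroup.le_comap_map (f := σ j) N)) ⁻¹' K))) ∧
    BLConst μQ νQj
        (fun j => ⇑(QuotientGroup.map N (N.map (σ j)) (σ j)
          (Subgroup.le_comap_map (f := σ j) N))) p ≤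
      BLConst μ ν (fun j => ⇑(σ j)) p ∧
    ((∀ j, N ≤ (σ j).ker) →
      BLConst μQ νQj
          (fun j => ⇑(QuotientGroup.map N (N.map (σ j)) (σ j)
            (Subgroup.le_comap_map (f := σ j) N))) p =
        BLConst μ ν (fun j => ⇑(σ j)) p) := by
  have hNM (j : J) := Subgroup.le_comap_map (σ j) N
  have hle := BLConst_quotientMap_le (p := p) hσ hNcompact hNjcompact hNM hWeil hWeilj
  refine ⟨fun hσ_proper _ => isCompact_preimage_pi_quotientMap hNjcompact hNM hσ_proper, hle,
    fun hker => hle.antisymm ?_⟩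
  exact BLConst_le_quotientMap hσ hNcompact
    (fun j => (Subgroup.map_eq_bot_iff N).2 (hker j)) hNM hWeil hWeilj

/-- **Factoring out a compact normal subgroup.**
Let `(G, σ, p)` be a Brascamp–Lieb datum of locally compact Hausdorff groups and `N` a compact
normal subgroup of `G` each of whose images `σ j '' N` is a compact normal subgroup of `Gj j`,
and let `σ̇ j : G ⧸ N → Gj j ⧸ σ j '' N` be the induced homomorphisms. Then the joint map of
the `σ̇ j` is proper whenever the joint map of the `σ j` is proper.  Moreover, if the Haar
measures on `N` and the `σ j '' N` are probability measures and all quotient Haar measures are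
normalised by the Weil quotient integral formula, then `BL(G ⧸ N, σ̇, p) ≤ BL(G, σ, p)`, with
equality when `N ⊆ ker (σ j)` for every `j`. -/
theorem BLConst_compact_quotient
    {J : Type*} [Fintype J]
    {G : Type*} [Group G] [TopologicalSpace G] [IsTopologicalGroup G] [LocallyCompactSpace G]
    [T2Space G] [MeasurableSpace G] [BorelSpace G]
    (μ : Measure G) [μ.IsHaarMeasure]
    {Gj : J → Type*} [∀ j, Group (Gj j)] [∀ j, TopologicalSpace (Gj j)]
    [∀ j, IsTopologicalGroup (Gj j)] [∀ j, LocallyCompactSpace (Gj j)] [∀ j, T2Space (Gj j)]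
    [∀ j, MeasurableSpace (Gj j)] [∀ j, BorelSpace (Gj j)]
    (ν : ∀ j, Measure (Gj j)) [∀ j, (ν j).IsHaarMeasure]
    (σ : ∀ j, G →* Gj j) (hσ : ∀ j, Continuous (σ j))
    (p : J → ℝ≥0∞) (hp : ∀ j, 1 ≤ p j)
    (N : Subgroup G) [N.Normal] (hNcompact : IsCompact (N : Set G))
    [∀ j, (N.map (σ j)).Normal] (hNjcompact : ∀ j, IsCompact ((N.map (σ j)) : Set (Gj j)))
    (νN : Measure N) [νN.IsHaarMeasure] [IsProbabilityMeasure νN]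
    (μQ : Measure (G ⧸ N)) [μQ.IsHaarMeasure]
    (hWeil : WeilFormula N μ νN μQ)
    (νNj : ∀ j, Measure (N.map (σ j))) [∀ j, (νNj j).IsHaarMeasure]
    [∀ j, IsProbabilityMeasure (νNj j)]
    (νQj : ∀ j, Measure (Gj j ⧸ N.map (σ j))) [∀ j, (νQj j).IsHaarMeasure]
    (hWeilj : ∀ j, WeilFormula (N.map (σ j)) (ν j) (νNj j) (νQj j)) :
    ((∀ K : Set (∀ j, Gj j), IsCompact K → IsCompact (Pi.monoidHom σ ⁻¹' K)) →
      (∀ K : Set (∀ j, Gj j ⧸ N.map (σ j)), IsCompact K →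
        IsCompact ((Pi.monoidHom fun j =>
          QuotientGroup.map N (N.map (σ j)) (σ j) (Subgroup.le_comap_map (f := σ j) N)) ⁻¹' K))) ∧
    BLConst μQ νQj
        (fun j => ⇑(QuotientGroup.map N (N.map (σ j)) (σ j)
          (Subgroup.le_comap_map (f := σ j) N))) p ≤
      BLConst μ ν (fun j => ⇑(σ j)) p ∧
    ((∀ j, N ≤ (σ j).ker) →
      BLConst μQ νQj
          (fun j => ⇑(QuotientGroup.map N (N.map (σ j)) (σ j)
            (Subgroup.le_comap_map (f := σ j) N))) p =
        BLConst μ ν (fun j => ⇑(σ j)) p) :=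
  BLConst_compact_quotient_general μ ν σ hσ p N hNcompact hNjcompact νN μQ hWeil νNj νQj hWeilj

end
end

section
/- Let n ≥ 1 and let N be a (not necessarily closed) normal subgroup of the Heisenberg group ℍⁿ. Then either N is contained in the centre {0} × ℝ, or N contains the centre {0} × ℝ. -/
open scoped ComplexConjugate

/-- The Heisenberg group `ℍⁿ`: the set `ℂⁿ × ℝ` with the group law
`(z, t) ⋄ (z', t') = (z + z', t + t' + Im (z̄ ⬝ z') / 2)`. -/
def Heisenberg (n : ℕ) : Type := (Fin n → ℂ) × ℝ

namespace Heisenberg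

variable {n : ℕ}

noncomputable instance : Group (Heisenberg n) where
  mul a b := (a.1 + b.1, a.2 + b.2 + (∑ i, conj (a.1 i) * b.1 i).im / 2)
  one := ((0 : Fin n → ℂ), (0 : ℝ))
  inv a := (-a.1, -a.2)
  mul_assoc a b c := by
    refine Prod.ext (add_assoc _ _ _) ?_
    show a.2 + b.2 + (∑ i, conj (a.1 i) * b.1 i).im / 2 + c.2 +
        (∑ i, conj ((a.1 + b.1) i) * c.1 i).im / 2 =
      a.2 + (b.2 + c.2 + (∑ i, conj (b.1 i) * c.1 i).im / 2) +
        (∑ i, conj (a.1 i) * ((b.1 + c.1) i)).im / 2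
    simp only [Pi.add_apply, map_add, add_mul, mul_add, Finset.sum_add_distrib,
      Complex.add_im]
    ring
  one_mul a := by
    refine Prod.ext (zero_add _) ?_
    show (0 : ℝ) + a.2 + (∑ i, conj ((0 : Fin n → ℂ) i) * a.1 i).im / 2 = a.2
    simp
  mul_one a := by
    refine Prod.ext (add_zero _) ?_
    show a.2 + 0 + (∑ i, conj (a.1 i) * (0 : Fin n → ℂ) i).im / 2 = a.2
    simp
  inv_mul_cancel a := by
    refine Prod.ext (neg_add_cancel _) ?_
    show -a.2 + a.2 + (∑ i, conj ((-a.1) i) * a.1 i).im / 2 = 0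
    have h : (∑ i, conj ((-a.1) i) * a.1 i).im = 0 := by
      rw [Complex.im_sum]
      refine Finset.sum_eq_zero fun i _ => ?_
      simp only [Pi.neg_apply, map_neg, neg_mul, Complex.neg_im, Complex.mul_im,
        Complex.conj_re, Complex.conj_im]
      ring
    rw [h]
    simp

noncomputable instance : TopologicalSpace (Heisenberg n) :=
  inferInstanceAs (TopologicalSpace ((Fin n → ℂ) × ℝ))

instance : MeasurableSpace (Heisenberg n) :=
  inferInstanceAs (MeasurableSpace ((Fin n → ℂ) × ℝ))

noncomputable instance : MeasureTheory.MeasureSpace (Heisenberg n) :=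
  inferInstanceAs (MeasureTheory.MeasureSpace ((Fin n → ℂ) × ℝ))

end Heisenberg

/-
The commutator of `(w, s)` and `(z, t)` is the central element `(0, Im (w̄ ⬝ z))`.
If a normal subgroup `N` contains some `g` with `g.1 ≠ 0`, it contains every commutator `⁅h, g⁆`,
and since `w ↦ Im (w̄ ⬝ g.1)` is a nonzero real-linear functional, these commutators already
exhaust the centre.
-/

open scoped commutatorElement

namespace Heisenberg

variable {n : ℕ}

noncomputable def symplecticForm (z z' : Fin n → ℂ) : ℝ := (∑ i, conj (z i) * z' i).im

theorem symplecticForm_self (z : Fin n → ℂ) : symplecticForm z z = 0 := by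
  simp only [symplecticForm, Complex.im_sum, Complex.mul_im, Complex.conj_re, Complex.conj_im]
  exact Finset.sum_eq_zero fun i _ => by ring

theorem symplecticForm_add_left (z z' w : Fin n → ℂ) :
    symplecticForm (z + z') w = symplecticForm z w + symplecticForm z' w := by
  simp only [symplecticForm, Pi.add_apply, map_add, add_mul, Finset.sum_add_distrib,
    Complex.add_im]

theorem symplecticForm_neg_right (z w : Fin n → ℂ) :
    symplecticForm z (-w) = -symplecticForm z w := by
  simp only [symplecticForm, Pi.neg_apply, mul_neg, Finset.sum_neg_distrib, Complex.neg_im]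

theorem symplecticForm_single_left (j : Fin n) (c : ℂ) (z : Fin n → ℂ) :
    symplecticForm (Pi.single j c) z = (conj c * z j).im := by
  rw [symplecticForm, Finset.sum_eq_single j (fun i _ hij => by simp [hij]) (by simp)]
  simp

theorem exists_symplecticForm_eq {z : Fin n → ℂ} (hz : z ≠ 0) (t : ℝ) :
    ∃ w, symplecticForm w z = t := by
  obtain ⟨j, hj⟩ := Function.ne_iff.mp hz
  refine ⟨Pi.single j (conj (t * Complex.I / z j)), ?_⟩
  rw [symplecticForm_single_left, Complex.conj_conj, div_mul_cancel₀ _ hj]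
  simp

theorem mul_fst (a b : Heisenberg n) : (a * b).1 = a.1 + b.1 := rfl

theorem mul_snd (a b : Heisenberg n) :
    (a * b).2 = a.2 + b.2 + symplecticForm a.1 b.1 / 2 := rfl

theorem inv_fst (a : Heisenberg n) : a⁻¹.1 = -a.1 := rfl

theorem inv_snd (a : Heisenberg n) : a⁻¹.2 = -a.2 := rfl

theorem commutatorElement_fst (a b : Heisenberg n) : ⁅a, b⁆.1 = 0 := by
  simp only [commutatorElement_def, mul_fst, inv_fst]
  abel

theorem commutatorElement_snd (a b : Heisenberg n) : ⁅a, b⁆.2 = symplecticForm a.1 b.1 := by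
  have hab : a.1 + b.1 + -a.1 = b.1 := by abel
  simp only [commutatorElement_def, mul_snd, mul_fst, inv_fst, inv_snd, hab,
    symplecticForm_add_left, symplecticForm_neg_right, symplecticForm_self]
  have hanti : symplecticForm b.1 a.1 = -symplecticForm a.1 b.1 := by
    simp only [symplecticForm, ← Complex.conj_im, map_sum, map_mul, Complex.conj_conj, mul_comm]
  rw [hanti]
  ring

theorem exists_commutatorElement_eq {g : Heisenberg n} (hg : g.1 ≠ 0) {x : Heisenberg n}
    (hx : x.1 = 0) : ∃ h : Heisenberg n, ⁅h, g⁆ = x := by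
  obtain ⟨w, hw⟩ := exists_symplecticForm_eq hg x.2
  exact ⟨(w, 0), Prod.ext ((commutatorElement_fst _ _).trans hx.symm)
    ((commutatorElement_snd _ _).trans hw)⟩

end Heisenberg

theorem Heisenberg.normal_subgroup_subset_center_or_center_subset_general
    (n : ℕ) (N : Subgroup (Heisenberg n)) (hN : N.Normal) :
    (N : Set (Heisenberg n)) ⊆ {x : Heisenberg n | x.1 = 0} ∨
      {x : Heisenberg n | x.1 = 0} ⊆ (N : Set (Heisenberg n)) := by
  by_cases hcentral : ∀ g ∈ N, (g : Heisenberg n).1 = 0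
  · exact Or.inl hcentral
  right
  obtain ⟨g, hgN, hg⟩ := not_forall₂.mp hcentral
  intro x hx
  obtain ⟨h, rfl⟩ := exists_commutatorElement_eq hg hx
  exact Subgroup.commutator_le_right ⊤ N
    (Subgroup.commutator_mem_commutator (Subgroup.mem_top h) hgN)

/-- **Normal subgroups of the Heisenberg group and its centre.**
Every normal subgroup of the Heisenberg group `ℍⁿ` is either contained in the centre
`{0} × ℝ` or contains the centre `{0} × ℝ`. -/
theorem Heisenberg.normal_subgroup_subset_center_or_center_subset
    (n : ℕ) (hn : 1 ≤ n) (N : Subgroup (Heisenberg n)) (hN : N.Normal) :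
    (N : Set (Heisenberg n)) ⊆ {x : Heisenberg n | x.1 = 0} ∨
      {x : Heisenberg n | x.1 = 0} ⊆ (N : Set (Heisenberg n)) :=
  Heisenberg.normal_subgroup_subset_center_or_center_subset_general n N hN
end
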